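/- arXiv:2202.10306 — 9 statements merged into one kernel-verified Lean document; each statement's English description precedes it below -/
import Mathlib

section
/- For real p with 1 < p < n (n > 1 an integer), setting p' = p/(p-1), the three positive numbers μ(p',n), ν(p',n), and π_{p,n}/2 satisfy the law-of-sines relation: ν(p',n)·sin(π/n) = μ(p',n)·sin(π/p'), i.e., they are side lengths of a triangle with opposite angles π/n, π/p', and (1/p - 1/n)π respectively. -/
/-!
Both integrals are Euler Beta integrals. The substitution `t = s ^ (1/n)` turns `n ν` into
`∫₀^∞ s^(1/n - 1) (1 + s)^(-1/p) ds = B(1/n, 1/p - 1/n)`, and `t = (1 + s) ^ (1/n)` turns `n μ`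
into `∫₀^∞ s^(-1/p) (1 + s)^(1/n - 1) ds = B(1 - 1/p, 1/p - 1/n)`. Writing both Beta values
through `Γ` and using the reflection formula `Γ(s) Γ(1 - s) sin(π s) = π` at `s = 1/n` and
`s = 1/p`, both sides of the law of sines become `π Γ(1/p - 1/n) / (n Γ(1/p) Γ(1 - 1/n))`.
-/

open Real MeasureTheory Set

theorem integral_comp_add_right_Ioi {E : Type*} [NormedAddCommGroup E] [NormedSpace ℝ E]
    (g : ℝ → E) (a c : ℝ) :
    ∫ x in Ioi a, g (x + c) = ∫ x in Ioi (a + c), g x := by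
  rw [← image_add_const_Ioi, integral_image_eq_integral_abs_deriv_smul measurableSet_Ioi
    (fun x _ ↦ ((hasDerivAt_id' x).add_const c).hasDerivWithinAt) (add_left_injective c).injOn]
  simp

theorem integral_Ioo_rpow_mul_one_sub_rpow {a b : ℝ} (ha : 0 < a) (hb : 0 < b) :
    ∫ x in Ioo (0:ℝ) 1, x ^ (a - 1) * (1 - x) ^ (b - 1) = Gamma a * Gamma b / Gamma (a + b) := by
  have h : Complex.betaIntegral a b
      = ((∫ x in (0:ℝ)..1, x ^ (a - 1) * (1 - x) ^ (b - 1) : ℝ) : ℂ) := by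
    rw [Complex.betaIntegral, ← intervalIntegral.integral_ofReal]
    refine intervalIntegral.integral_congr fun x hx ↦ ?_
    rw [uIcc_of_le zero_le_one] at hx
    simp [Complex.ofReal_cpow hx.1, Complex.ofReal_cpow (sub_nonneg.2 hx.2)]
  rw [← ProbabilityTheory.beta, ProbabilityTheory.beta_eq_betaIntegralReal a b ha hb, h,
    Complex.ofReal_re, intervalIntegral.integral_of_le zero_le_one, integral_Ioc_eq_integral_Ioo]

theorem image_one_sub_inv_one_add_Ioi :
    (fun s : ℝ ↦ 1 - (1 + s)⁻¹) '' Ioi 0 = Ioo 0 1 := by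
  ext v
  constructor
  · rintro ⟨s, hs, rfl⟩
    have h1s : (1 : ℝ) < 1 + s := by simp only [mem_Ioi] at hs; linarith
    constructor
    · linarith [inv_lt_one_of_one_lt₀ h1s]
    · linarith [inv_pos.2 (zero_lt_one.trans h1s)]
  · rintro ⟨hv0, hv1⟩
    refine ⟨(1 - v)⁻¹ - 1, ?_, by simp⟩
    simp only [mem_Ioi, sub_pos]
    exact one_lt_inv₀ (by linarith) |>.2 (by linarith)

theorem integral_Ioi_rpow_mul_one_add_rpow {a b : ℝ} (ha : 0 < a) (hb : 0 < b) :
    ∫ s in Ioi (0:ℝ), s ^ (a - 1) * (1 + s) ^ (-(a + b)) = Gamma a * Gamma b / Gamma (a + b) := by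
  have hderiv : ∀ s ∈ Ioi (0:ℝ), HasDerivWithinAt (fun s ↦ 1 - (1 + s)⁻¹)
      ((1 + s) ^ (-2:ℝ)) (Ioi 0) s := by
    intro s hs
    have h1s : 0 < 1 + s := by simp only [mem_Ioi] at hs; linarith
    refine (((hasDerivAt_id' s).const_add 1).inv h1s.ne').const_sub 1
      |>.hasDerivWithinAt.congr_deriv ?_
    rw [rpow_neg h1s.le, rpow_two]
    ring
  have hinj : InjOn (fun s : ℝ ↦ 1 - (1 + s)⁻¹) (Ioi 0) := fun s _ t _ h ↦ by simpa using h
  rw [← integral_Ioo_rpow_mul_one_sub_rpow ha hb, ← image_one_sub_inv_one_add_Ioi,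
    integral_image_eq_integral_abs_deriv_smul measurableSet_Ioi hderiv hinj]
  refine setIntegral_congr_fun measurableSet_Ioi fun s hs ↦ ?_
  have hs0 : 0 < s := hs
  have h1s : 0 < 1 + s := by linarith
  have hv : 1 - (1 + s)⁻¹ = s * (1 + s)⁻¹ := by field_simp; ring
  have h1v : 1 - s * (1 + s)⁻¹ = (1 + s)⁻¹ := by field_simp; ring
  simp only [smul_eq_mul, hv, h1v, abs_of_pos (rpow_pos_of_pos h1s _),
    mul_rpow hs0.le (inv_nonneg.2 h1s.le), inv_rpow h1s.le, ← rpow_neg h1s.le]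
  rw [mul_assoc (s ^ _), ← rpow_add h1s, mul_left_comm, ← rpow_add h1s]
  ring_nf

theorem integral_Ioi_one_add_pow_rpow_neg {n : ℕ} {q : ℝ} (hn : n ≠ 0) (hq : (n:ℝ)⁻¹ < q) :
    ∫ t in Ioi (0:ℝ), (1 + t ^ n) ^ (-q)
      = Gamma (n:ℝ)⁻¹ * Gamma (q - (n:ℝ)⁻¹) / (n * Gamma q) := by
  have hn' : (0:ℝ) < (n:ℝ)⁻¹ := by positivity
  have hbeta := integral_Ioi_rpow_mul_one_add_rpow hn' (sub_pos.2 hq)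
  rw [add_sub_cancel] at hbeta
  rw [← integral_comp_rpow_Ioi_of_pos hn', mul_comm (n:ℝ), ← div_div, ← hbeta, div_eq_inv_mul,
    ← integral_const_mul]
  refine setIntegral_congr_fun measurableSet_Ioi fun x hx ↦ ?_
  rw [smul_eq_mul, rpow_inv_natCast_pow (le_of_lt hx) hn, mul_assoc]

theorem integral_Ioi_pow_sub_one_rpow_neg {n : ℕ} {q : ℝ} (hn : n ≠ 0) (hq : (n:ℝ)⁻¹ < q)
    (hq1 : q < 1) :
    ∫ t in Ioi (1:ℝ), (t ^ n - 1) ^ (-q)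
      = Gamma (1 - q) * Gamma (q - (n:ℝ)⁻¹) / (n * Gamma (1 - (n:ℝ)⁻¹)) := by
  have hn' : (0:ℝ) < (n:ℝ)⁻¹ := by positivity
  have hbeta := integral_Ioi_rpow_mul_one_add_rpow (sub_pos.2 hq1) (sub_pos.2 hq)
  rw [sub_add_sub_cancel] at hbeta
  have hshift := integral_comp_add_right_Ioi
    (fun x : ℝ ↦ (n:ℝ)⁻¹ * (x ^ ((n:ℝ)⁻¹ - 1) * (x - 1) ^ (-q))) 0 1
  rw [zero_add] at hshift
  rw [← integral_comp_rpow_Ioi_of_pos' hn' zero_le_one, one_rpow, mul_comm (n:ℝ), ← div_div,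
    ← hbeta, div_eq_inv_mul, ← integral_const_mul]
  calc ∫ x in Ioi 1, ((n:ℝ)⁻¹ * x ^ ((n:ℝ)⁻¹ - 1)) • ((x ^ (n:ℝ)⁻¹) ^ n - 1) ^ (-q)
      = ∫ x in Ioi 1, (n:ℝ)⁻¹ * (x ^ ((n:ℝ)⁻¹ - 1) * (x - 1) ^ (-q)) := by
        refine setIntegral_congr_fun measurableSet_Ioi fun x hx ↦ ?_
        rw [smul_eq_mul, rpow_inv_natCast_pow (zero_le_one.trans hx.le) hn, mul_assoc]
    _ = ∫ s in Ioi 0, (n:ℝ)⁻¹ * (s ^ (1 - q - 1) * (1 + s) ^ (-(1 - (n:ℝ)⁻¹))) := by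
        rw [← hshift]
        refine setIntegral_congr_fun measurableSet_Ioi fun s _ ↦ ?_
        rw [add_sub_cancel_right, add_comm s]
        ring_nf

theorem Gamma_mul_Gamma_one_sub_mul_sin {s : ℝ} (hs : sin (π * s) ≠ 0) :
    Gamma s * Gamma (1 - s) * sin (π * s) = π := by
  rw [Gamma_mul_Gamma_one_sub, div_mul_cancel₀ _ hs]

theorem sin_pi_mul_pos {s : ℝ} (hs0 : 0 < s) (hs1 : s < 1) : 0 < sin (π * s) :=
  sin_pos_of_pos_of_lt_pi (by positivity) (mul_lt_of_lt_one_right pi_pos hs1)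

theorem stmt_6_general (p : ℝ) (n : ℕ) (hp : 1 < p) (hpn : p < n) :
    (∫ t in Ioi (0:ℝ), (1 + t ^ n) ^ (-(1/p))) * Real.sin (π / n)
      = (∫ t in Ioi (1:ℝ), (t ^ n - 1) ^ (-(1/p))) * Real.sin (π / (p / (p - 1))) := by
  have hp0 : 0 < p := zero_lt_one.trans hp
  have hn : (1:ℝ) < n := hp.trans hpn
  have hn0 : n ≠ 0 := by rintro rfl; norm_num at hn
  have hnq : (n:ℝ)⁻¹ < 1 / p := by rw [one_div]; exact inv_strictAnti₀ hp0 hpn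
  have hq1 : 1 / p < 1 := (div_lt_one hp0).2 hp
  have hangle : π / (p / (p - 1)) = π - π * (1 / p) := by field_simp
  rw [integral_Ioi_one_add_pow_rpow_neg hn0 hnq, integral_Ioi_pow_sub_one_rpow_neg hn0 hnq hq1,
    hangle, sin_pi_sub, div_eq_mul_inv π]
  have hsn := sin_pi_mul_pos (inv_pos.2 (zero_lt_one.trans hn)) (inv_lt_one_of_one_lt₀ hn)
  have hsq := sin_pi_mul_pos (by positivity) hq1
  have hΓn := Gamma_pos_of_pos (sub_pos.2 (inv_lt_one_of_one_lt₀ hn))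
  rw [div_mul_eq_mul_div, div_mul_eq_mul_div, div_eq_div_iff (by positivity) (by positivity)]
  linear_combination n * Gamma (1 / p - (n:ℝ)⁻¹) *
    (Gamma_mul_Gamma_one_sub_mul_sin hsn.ne' - Gamma_mul_Gamma_one_sub_mul_sin hsq.ne')

theorem stmt_6 (p : ℝ) (n : ℕ) (hp : 1 < p) (hn : 1 < n) (hpn : p < n) :
    (∫ t in Ioi (0:ℝ), (1 + t ^ n) ^ (-(1/p))) * Real.sin (π / n)
      = (∫ t in Ioi (1:ℝ), (t ^ n - 1) ^ (-(1/p))) * Real.sin (π / (p / (p - 1))) :=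
  stmt_6_general p n hp hpn
end

section
/- For real p with 1 < p < n (n > 1 an integer): μ(p',n) = π_{p,n} / (2(sin(π/p)·cot(π/n) - cos(π/p))), where p' = p/(p-1). -/
/-!
The substitutions `t = u ^ (1/n)` and `t = u ^ (-1/n)` turn `n π_{p,n} / 2` and `n μ(p',n)`
into the Beta values `B(1/n, 1 - 1/p)` and `B(1/p - 1/n, 1 - 1/p)`. By Euler's reflection
formula `Γ(s) sin(πs) = π / Γ(1 - s)`, the product `B(x, y) sin(πx)` is symmetric in `x` and
`z = 1 - x - y`, so the ratio of the two integrals is `sin(π/n) / sin(π(1/p - 1/n))`, which is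
the reciprocal of `sin(π/p) cot(π/n) - cos(π/p)`.
-/

open Real MeasureTheory Set ProbabilityTheory

lemma intervalIntegral_rpow_mul_one_sub_rpow_eq_beta {x y : ℝ} (hx : 0 < x) (hy : 0 < y) :
    ∫ t in (0:ℝ)..1, t ^ (x - 1) * (1 - t) ^ (y - 1) = beta x y := by
  have hcast : Complex.betaIntegral x y
      = ((∫ t in (0:ℝ)..1, t ^ (x - 1) * (1 - t) ^ (y - 1) : ℝ) : ℂ) := by
    rw [Complex.betaIntegral, ← intervalIntegral.integral_ofReal]
    refine intervalIntegral.integral_congr fun t ht => ?_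
    rw [uIcc_of_le zero_le_one] at ht
    push_cast
    rw [Complex.ofReal_cpow ht.1, Complex.ofReal_cpow (sub_nonneg.mpr ht.2)]
    push_cast
    ring
  rw [beta_eq_betaIntegralReal x y hx hy, hcast, Complex.ofReal_re]

lemma rpow_image_Ioo_zero_one {p : ℝ} (hp : 0 < p) :
    (fun x : ℝ => x ^ p) '' Ioo 0 1 = Ioo 0 1 := by
  ext y
  constructor
  · rintro ⟨x, ⟨hx0, hx1⟩, rfl⟩
    exact ⟨rpow_pos_of_pos hx0 p, rpow_lt_one hx0.le hx1 hp⟩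
  · rintro ⟨hy0, hy1⟩
    refine ⟨y ^ p⁻¹, ⟨rpow_pos_of_pos hy0 _, rpow_lt_one hy0.le hy1 (inv_pos.mpr hp)⟩, ?_⟩
    dsimp only
    rw [← rpow_mul hy0.le, inv_mul_cancel₀ hp.ne', rpow_one]

lemma rpow_image_Ioi_one_of_neg {p : ℝ} (hp : p < 0) :
    (fun x : ℝ => x ^ p) '' Ioi 1 = Ioo 0 1 := by
  ext y
  constructor
  · rintro ⟨x, hx, rfl⟩
    exact ⟨rpow_pos_of_pos (one_pos.trans hx) p, rpow_lt_one_of_one_lt_of_neg hx hp⟩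
  · rintro ⟨hy0, hy1⟩
    refine ⟨y ^ p⁻¹, one_lt_rpow_of_pos_of_lt_one_of_neg hy0 hy1 (inv_lt_zero.mpr hp), ?_⟩
    dsimp only
    rw [← rpow_mul hy0.le, inv_mul_cancel₀ hp.ne, rpow_one]

lemma integral_image_rpow {s : Set ℝ} (hs : MeasurableSet s) (hs0 : s ⊆ Ioi 0) {p : ℝ}
    (hp : p ≠ 0) (g : ℝ → ℝ) :
    ∫ y in (fun x : ℝ => x ^ p) '' s, g y = ∫ x in s, |p| * x ^ (p - 1) * g (x ^ p) := by
  rw [integral_image_eq_integral_abs_deriv_smul hs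
    (fun x hx => (hasDerivAt_rpow_const (Or.inl (hs0 hx).ne')).hasDerivWithinAt)
    ((rpow_left_injOn hp).mono (hs0.trans Ioi_subset_Ici_self))]
  refine setIntegral_congr_fun hs fun x hx => ?_
  rw [smul_eq_mul, abs_mul, abs_of_pos (rpow_pos_of_pos (hs0 hx) _)]

lemma intervalIntegral_zero_one_eq_setIntegral_Ioo (g : ℝ → ℝ) :
    ∫ t in (0:ℝ)..1, g t = ∫ t in Ioo 0 1, g t := by
  rw [intervalIntegral.integral_of_le zero_le_one, integral_Ioc_eq_integral_Ioo]

lemma natCast_mul_intervalIntegral_one_sub_pow_rpow_eq_beta {n : ℕ} (hn : n ≠ 0) {a : ℝ}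
    (ha1 : a < 1) :
    n * ∫ t in (0:ℝ)..1, (1 - t ^ n) ^ (-a) = beta (1 / n) (1 - a) := by
  have hn0 : (0:ℝ) < n := by positivity
  have hsubst := integral_image_rpow (measurableSet_Ioo (a := 0) (b := 1)) Ioo_subset_Ioi_self
    hn0.ne' fun u => u ^ (1 / (n:ℝ) - 1) * (1 - u) ^ (1 - a - 1)
  rw [rpow_image_Ioo_zero_one hn0] at hsubst
  rw [← intervalIntegral_rpow_mul_one_sub_rpow_eq_beta (by positivity) (by linarith),
    intervalIntegral_zero_one_eq_setIntegral_Ioo, intervalIntegral_zero_one_eq_setIntegral_Ioo,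
    hsubst, ← integral_const_mul]
  refine setIntegral_congr_fun measurableSet_Ioo fun x ⟨hx0, _⟩ => ?_
  have hpow : x ^ ((n:ℝ) - 1) * (x ^ (n:ℝ)) ^ (1 / (n:ℝ) - 1) = 1 := by
    rw [← rpow_mul hx0.le, ← rpow_add hx0,
      show (n:ℝ) - 1 + n * (1 / n - 1) = 0 by field_simp; ring, rpow_zero]
  rw [rpow_natCast] at hpow
  rw [abs_of_pos hn0, rpow_natCast, sub_sub_cancel_left]
  linear_combination -(n * (1 - x ^ n) ^ (-a)) * hpow

lemma natCast_mul_integral_Ioi_one_pow_sub_one_rpow_eq_beta {n : ℕ} (hn : n ≠ 0) {a : ℝ}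
    (hna : 1 / n < a) (ha1 : a < 1) :
    n * ∫ t in Ioi (1:ℝ), (t ^ n - 1) ^ (-a) = beta (a - 1 / n) (1 - a) := by
  have hn0 : (0:ℝ) < n := by positivity
  have hsubst := integral_image_rpow measurableSet_Ioi (Ioi_subset_Ioi zero_le_one)
    (neg_ne_zero.mpr hn0.ne') fun u => u ^ (a - 1 / (n:ℝ) - 1) * (1 - u) ^ (1 - a - 1)
  rw [rpow_image_Ioi_one_of_neg (neg_neg_of_pos hn0)] at hsubst
  rw [← intervalIntegral_rpow_mul_one_sub_rpow_eq_beta (by linarith) (by linarith),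
    intervalIntegral_zero_one_eq_setIntegral_Ioo, hsubst, ← integral_const_mul]
  refine setIntegral_congr_fun measurableSet_Ioi fun x (hx : 1 < x) => ?_
  have hx0 : 0 < x := one_pos.trans hx
  have hxn : 1 < x ^ n := one_lt_pow₀ hx hn
  have hsplit : 1 - x ^ (-(n:ℝ)) = (x ^ n - 1) * x ^ (-(n:ℝ)) := by
    rw [rpow_neg hx0.le, rpow_natCast]
    field_simp
  have hpow :
      x ^ (-(n:ℝ) - 1) * (x ^ (-(n:ℝ))) ^ (a - 1 / n - 1) * (x ^ (-(n:ℝ))) ^ (-a) = 1 := by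
    rw [← rpow_mul hx0.le, ← rpow_mul hx0.le, ← rpow_add hx0, ← rpow_add hx0,
      show -(n:ℝ) - 1 + -n * (a - 1 / n - 1) + -n * -a = 0 by field_simp; ring, rpow_zero]
  rw [abs_neg, abs_of_pos hn0, sub_sub_cancel_left, hsplit,
    mul_rpow (sub_nonneg.mpr hxn.le) (rpow_nonneg hx0.le _)]
  linear_combination -(n * (x ^ n - 1) ^ (-a)) * hpow

lemma Gamma_mul_sin_eq_pi_div_Gamma_one_sub {s : ℝ} (hs0 : 0 < s) (hs1 : s < 1) :
    Gamma s * sin (π * s) = π / Gamma (1 - s) := by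
  have hsin : sin (π * s) ≠ 0 :=
    (sin_pos_of_pos_of_lt_pi (by positivity) (mul_lt_of_lt_one_right pi_pos hs1)).ne'
  have hG : Gamma (1 - s) ≠ 0 := (Gamma_pos_of_pos (sub_pos.mpr hs1)).ne'
  rw [eq_div_iff hG, mul_right_comm, Gamma_mul_Gamma_one_sub, div_mul_cancel₀ _ hsin]

lemma beta_mul_sin_comm {x y z : ℝ} (hx : 0 < x) (hy : 0 < y) (hz : 0 < z)
    (hxyz : x + y + z = 1) :
    beta x y * sin (π * x) = beta z y * sin (π * z) := by
  have hx1 : x + y = 1 - z := by linarith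
  have hz1 : z + y = 1 - x := by linarith
  rw [beta, beta, hx1, hz1, div_mul_eq_mul_div, div_mul_eq_mul_div, mul_right_comm,
    Gamma_mul_sin_eq_pi_div_Gamma_one_sub hx (by linarith), mul_right_comm (Gamma z),
    Gamma_mul_sin_eq_pi_div_Gamma_one_sub hz (by linarith)]
  ring

lemma sin_mul_cot_sub_cos (x y : ℝ) (hy : sin y ≠ 0) :
    sin x * (cos y / sin y) - cos x = sin (x - y) / sin y := by
  rw [sin_sub]
  field_simp

theorem stmt_8_general (p : ℝ) (n : ℕ) (hp : 1 < p) (hpn : p < n) :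
    (∫ t in Ioi (1:ℝ), (t ^ n - 1) ^ (-(1/p)))
      = (2 * ∫ t in (0:ℝ)..1, (1 - t ^ n) ^ (-(1/p)))
        / (2 * (Real.sin (π / p) * (Real.cos (π / n) / Real.sin (π / n))
            - Real.cos (π / p))) := by
  have hp0 : 0 < p := one_pos.trans hp
  have hn0 : (0:ℝ) < n := hp0.trans hpn
  have hn : n ≠ 0 := by exact_mod_cast hn0.ne'
  have hba : 1 / (n:ℝ) < 1 / p := one_div_lt_one_div_of_lt hp0 hpn
  have ha1 : 1 / p < 1 := (div_lt_one hp0).mpr hp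
  have hb : 0 < 1 / (n:ℝ) := one_div_pos.mpr hn0
  have hsin_b : 0 < sin (π * (1 / n)) :=
    sin_pos_of_pos_of_lt_pi (by positivity) (mul_lt_of_lt_one_right pi_pos (by linarith))
  have hsin_ab : 0 < sin (π * (1 / p - 1 / n)) :=
    sin_pos_of_pos_of_lt_pi (mul_pos pi_pos (sub_pos.mpr hba))
      (mul_lt_of_lt_one_right pi_pos (by linarith))
  have hcot : sin (π / p) * (cos (π / n) / sin (π / n)) - cos (π / p)
      = sin (π * (1 / p - 1 / n)) / sin (π * (1 / n)) := by
    rw [← mul_one_div, ← mul_one_div π (n:ℝ), sin_mul_cot_sub_cos _ _ hsin_b.ne', mul_sub]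
  have hbeta := beta_mul_sin_comm (sub_pos.mpr hba) (sub_pos.mpr ha1) hb (by ring)
  rw [← natCast_mul_integral_Ioi_one_pow_sub_one_rpow_eq_beta hn hba ha1,
    ← natCast_mul_intervalIntegral_one_sub_pow_rpow_eq_beta hn ha1] at hbeta
  rw [hcot, mul_div_mul_left _ _ two_ne_zero, eq_div_iff (div_pos hsin_ab hsin_b).ne',
    mul_div_assoc', div_eq_iff hsin_b.ne']
  exact mul_left_cancel₀ hn0.ne' (by linear_combination hbeta)

theorem stmt_8 (p : ℝ) (n : ℕ) (hp : 1 < p) (hn : 1 < n) (hpn : p < n) :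
    (∫ t in Ioi (1:ℝ), (t ^ n - 1) ^ (-(1/p)))
      = (2 * ∫ t in (0:ℝ)..1, (1 - t ^ n) ^ (-(1/p)))
        / (2 * (Real.sin (π / p) * (Real.cos (π / n) / Real.sin (π / n))
            - Real.cos (π / p))) :=
  stmt_8_general p n hp hpn
end

section
/- For real p with 1 < p < n (n > 1 an integer): ν(p',n) = π_{p,n} / (2(cos(π/n) - sin(π/n)·cot(π/p))), where p' = p/(p-1). -/
open Real MeasureTheory Set

/-!
With `a = 1/n` and `c = 1/p`, the substitution `x = t ^ n` followed by `x ↦ x / (1 + x)` turns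
`∫₀^∞ (1 + t^n)^(-c)` into `B(a, c - a) / n`, and `x = t ^ n` alone turns `∫₀¹ (1 - t^n)^(-c)`
into `B(a, 1 - c) / n`. By the reflection formula the ratio of the two Beta values is
`sin (π c) / sin (π (c - a))`, which is also the reciprocal of `cos (π a) - sin (π a) cot (π c)`.
-/

theorem integral_Ioo_rpow_mul_one_sub_rpow_eq_Gamma {u v : ℝ} (hu : 0 < u) (hv : 0 < v) :
    ∫ x in Ioo (0:ℝ) 1, x ^ (u - 1) * (1 - x) ^ (v - 1) = Gamma u * Gamma v / Gamma (u + v) := by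
  have hbeta := Complex.betaIntegral_eq_Gamma_mul_div u v (by simpa) (by simpa)
  rw [← Complex.ofReal_add, Complex.Gamma_ofReal, Complex.Gamma_ofReal, Complex.Gamma_ofReal,
    Complex.betaIntegral, intervalIntegral.integral_of_le zero_le_one,
    integral_Ioc_eq_integral_Ioo] at hbeta
  rw [← Complex.ofReal_inj, ← integral_complex_ofReal]
  push_cast
  rw [← hbeta]
  refine setIntegral_congr_fun measurableSet_Ioo fun x hx => ?_
  rw [Complex.ofReal_cpow hx.1.le, Complex.ofReal_cpow (sub_pos.2 hx.2).le]
  push_cast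
  ring

theorem rpow_sub_one_mul_rpow_rpow_inv_sub_one {t r : ℝ} (ht : 0 < t) (hr : r ≠ 0) :
    t ^ (r - 1) * (t ^ r) ^ (r⁻¹ - 1) = 1 := by
  rw [← rpow_mul ht.le, ← rpow_add ht, show r - 1 + r * (r⁻¹ - 1) = 0 by field_simp; ring,
    rpow_zero]

theorem integral_Ioi_comp_rpow (g : ℝ → ℝ) {r : ℝ} (hr : 0 < r) :
    ∫ t in Ioi 0, g (t ^ r) = r⁻¹ * ∫ x in Ioi 0, x ^ (r⁻¹ - 1) * g x := by
  conv_rhs => rw [← integral_comp_rpow_Ioi_of_pos hr, ← integral_const_mul]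
  refine setIntegral_congr_fun measurableSet_Ioi fun t ht => ?_
  have h := rpow_sub_one_mul_rpow_rpow_inv_sub_one ht hr.ne'
  rw [smul_eq_mul, show r * t ^ (r - 1) * ((t ^ r) ^ (r⁻¹ - 1) * g (t ^ r))
    = r * (t ^ (r - 1) * (t ^ r) ^ (r⁻¹ - 1)) * g (t ^ r) by ring, h]
  field_simp

theorem integral_comp_rpow_Ioo_of_pos (g : ℝ → ℝ) {r : ℝ} (hr : 0 < r) :
    ∫ t in Ioo 0 1, r * t ^ (r - 1) * g (t ^ r) = ∫ x in Ioo 0 1, g x := by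
  have himage : (· ^ r) '' Ioo 0 1 = Ioo (0:ℝ) 1 := by
    ext x
    refine ⟨?_, fun hx => ⟨x ^ r⁻¹,
      ⟨rpow_pos_of_pos hx.1 _, rpow_lt_one hx.1.le hx.2 (inv_pos.2 hr)⟩, ?_⟩⟩
    · rintro ⟨t, ht, rfl⟩
      exact ⟨rpow_pos_of_pos ht.1 r, rpow_lt_one ht.1.le ht.2 hr⟩
    · simp [← rpow_mul hx.1.le, hr.ne']
  have hsubst := integral_image_eq_integral_abs_deriv_smul (measurableSet_Ioo (a := (0:ℝ)) (b := 1))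
    (fun t ht ↦ (hasDerivAt_rpow_const (Or.inl ht.1.ne')).hasDerivWithinAt)
    ((rpow_left_injOn hr.ne').mono fun t ht => ht.1.le) g
  rw [himage] at hsubst
  rw [hsubst]
  refine setIntegral_congr_fun measurableSet_Ioo fun t ht => ?_
  rw [smul_eq_mul, abs_of_pos (by have := ht.1; positivity)]

theorem integral_Ioo_comp_rpow (g : ℝ → ℝ) {r : ℝ} (hr : 0 < r) :
    ∫ t in Ioo 0 1, g (t ^ r) = r⁻¹ * ∫ x in Ioo 0 1, x ^ (r⁻¹ - 1) * g x := by
  conv_rhs => rw [← integral_comp_rpow_Ioo_of_pos _ hr, ← integral_const_mul]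
  refine setIntegral_congr_fun measurableSet_Ioo fun t ht => ?_
  have h := rpow_sub_one_mul_rpow_rpow_inv_sub_one ht.1 hr.ne'
  rw [show r * t ^ (r - 1) * ((t ^ r) ^ (r⁻¹ - 1) * g (t ^ r))
    = r * (t ^ (r - 1) * (t ^ r) ^ (r⁻¹ - 1)) * g (t ^ r) by ring, h]
  field_simp

theorem integral_Ioo_eq_integral_Ioi_div_one_add (g : ℝ → ℝ) :
    ∫ x in Ioo 0 1, g x = ∫ u in Ioi 0, ((1 + u) ^ 2)⁻¹ * g (u / (1 + u)) := by
  have himage : (fun u : ℝ => u / (1 + u)) '' Ioi 0 = Ioo 0 1 := by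
    ext x
    refine ⟨?_, fun hx => ⟨x / (1 - x), div_pos hx.1 (sub_pos.2 hx.2), ?_⟩⟩
    · rintro ⟨u, hu, rfl⟩
      have hu : (0:ℝ) < u := hu
      exact ⟨by positivity, (div_lt_one (by positivity)).2 (by linarith)⟩
    · have := sub_pos.2 hx.2
      field_simp
      ring
  have hderiv : ∀ u ∈ Ioi (0:ℝ),
      HasDerivWithinAt (fun u : ℝ => u / (1 + u)) ((1 + u) ^ 2)⁻¹ (Ioi 0) u := by
    intro u hu
    have hu : (0:ℝ) < u := hu
    refine HasDerivAt.hasDerivWithinAt ?_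
    exact ((hasDerivAt_id' u).fun_div ((hasDerivAt_id' u).const_add 1) (by positivity)).congr_deriv
      (by ring)
  have hinj : InjOn (fun u : ℝ => u / (1 + u)) (Ioi 0) := by
    intro x hx y hy hxy
    have hx : (0:ℝ) < x := hx
    have hy : (0:ℝ) < y := hy
    field_simp at hxy
    linarith
  rw [← himage, integral_image_eq_integral_abs_deriv_smul measurableSet_Ioi hderiv hinj]
  refine setIntegral_congr_fun measurableSet_Ioi fun u hu => ?_
  rw [smul_eq_mul, abs_of_pos (by have : (0:ℝ) < u := hu; positivity)]

theorem integral_Ioo_rpow_mul_one_sub_rpow_eq_integral_Ioi (a c : ℝ) :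
    ∫ x in Ioo (0:ℝ) 1, x ^ (a - 1) * (1 - x) ^ (c - a - 1)
      = ∫ u in Ioi (0:ℝ), u ^ (a - 1) * (1 + u) ^ (-c) := by
  rw [integral_Ioo_eq_integral_Ioi_div_one_add]
  refine setIntegral_congr_fun measurableSet_Ioi fun u hu => ?_
  have hu : (0:ℝ) < u := hu
  have hv : (0:ℝ) < 1 + u := by linarith
  have hsub : 1 - u / (1 + u) = (1 + u)⁻¹ := by field_simp; ring
  rw [hsub, div_eq_mul_inv, mul_rpow hu.le (inv_nonneg.2 hv.le), inv_rpow hv.le, inv_rpow hv.le,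
    ← rpow_neg hv.le, ← rpow_neg hv.le, ← rpow_natCast, ← rpow_neg hv.le]
  have hexp : (1 + u) ^ (-((2:ℕ):ℝ)) * ((1 + u) ^ (-(a - 1)) * (1 + u) ^ (-(c - a - 1)))
      = (1 + u) ^ (-c) := by
    rw [← rpow_add hv, ← rpow_add hv]
    congr 1
    push_cast
    ring
  linear_combination u ^ (a - 1) * hexp

theorem integral_Ioi_one_add_rpow_rpow_neg {r c : ℝ} (hr : 0 < r) (hrc : r⁻¹ < c) :
    ∫ t in Ioi (0:ℝ), (1 + t ^ r) ^ (-c) = Gamma r⁻¹ / r * (Gamma (c - r⁻¹) / Gamma c) := by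
  rw [integral_Ioi_comp_rpow (fun x => (1 + x) ^ (-c)) hr,
    ← integral_Ioo_rpow_mul_one_sub_rpow_eq_integral_Ioi,
    integral_Ioo_rpow_mul_one_sub_rpow_eq_Gamma (inv_pos.2 hr) (sub_pos.2 hrc), add_sub_cancel]
  ring

theorem integral_one_sub_rpow_rpow_neg {r c : ℝ} (hr : 0 < r) (hc : c < 1) :
    ∫ t in (0:ℝ)..1, (1 - t ^ r) ^ (-c)
      = Gamma r⁻¹ / r * (Gamma (1 - c) / Gamma (1 - (c - r⁻¹))) := by
  have hbeta := integral_Ioo_rpow_mul_one_sub_rpow_eq_Gamma (inv_pos.2 hr) (sub_pos.2 hc)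
  rw [sub_sub_cancel_left, show r⁻¹ + (1 - c) = 1 - (c - r⁻¹) by ring] at hbeta
  rw [intervalIntegral.integral_of_le zero_le_one, integral_Ioc_eq_integral_Ioo,
    integral_Ioo_comp_rpow (fun x => (1 - x) ^ (-c)) hr, hbeta]
  ring

theorem Gamma_eq_pi_div_sin_div_Gamma_one_sub {s : ℝ} (hs1 : s < 1) :
    Gamma s = π / sin (π * s) / Gamma (1 - s) := by
  rw [← Gamma_mul_Gamma_one_sub, mul_div_cancel_right₀ _ (Gamma_pos_of_pos (sub_pos.2 hs1)).ne']

theorem Gamma_div_Gamma_eq_of_reflection {s t : ℝ} (hs : 0 < s) (hs1 : s < 1) (ht : 0 < t)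
    (ht1 : t < 1) :
    Gamma s / Gamma t = Gamma (1 - t) / Gamma (1 - s) * (sin (π * t) / sin (π * s)) := by
  have hsin_s := sin_pos_of_pos_of_lt_pi (by positivity) (by nlinarith [pi_pos] : π * s < π)
  have hsin_t := sin_pos_of_pos_of_lt_pi (by positivity) (by nlinarith [pi_pos] : π * t < π)
  have hΓs := Gamma_pos_of_pos (sub_pos.2 hs1)
  have hΓt := Gamma_pos_of_pos (sub_pos.2 ht1)
  rw [Gamma_eq_pi_div_sin_div_Gamma_one_sub hs1, Gamma_eq_pi_div_sin_div_Gamma_one_sub ht1]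
  field_simp

theorem cos_sub_sin_mul_cos_div_sin (x : ℝ) {y : ℝ} (hy : sin y ≠ 0) :
    cos x - sin x * (cos y / sin y) = sin (y - x) / sin y := by
  rw [sin_sub]
  field_simp

theorem stmt_9_general (p : ℝ) (n : ℕ) (hp : 1 < p) (hpn : p < n) :
    (∫ t in Ioi (0:ℝ), (1 + t ^ n) ^ (-(1/p)))
      = (2 * ∫ t in (0:ℝ)..1, (1 - t ^ n) ^ (-(1/p)))
        / (2 * (Real.cos (π / n)
            - Real.sin (π / n) * (Real.cos (π / p) / Real.sin (π / p)))) := by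
  have hn : (0:ℝ) < n := by linarith
  have hc : 1 / p < 1 := (div_lt_one (by linarith)).2 hp
  have hac : (n:ℝ)⁻¹ < 1 / p := by rw [one_div]; exact inv_strictAnti₀ (by linarith) hpn
  have hGamma := Gamma_div_Gamma_eq_of_reflection (sub_pos.2 hac) (by linarith [inv_pos.2 hn])
    (hac.trans' (inv_pos.2 hn)) hc
  rw [mul_sub, mul_one_div, ← div_eq_mul_inv] at hGamma
  simp_rw [← rpow_natCast]
  have hsin : sin (π / p) ≠ 0 :=
    (sin_pos_of_pos_of_lt_pi (by positivity) (div_lt_self pi_pos hp)).ne'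
  rw [integral_Ioi_one_add_rpow_rpow_neg hn hac, integral_one_sub_rpow_rpow_neg hn hc, hGamma,
    cos_sub_sin_mul_cos_div_sin _ hsin]
  field_simp

theorem stmt_9 (p : ℝ) (n : ℕ) (hp : 1 < p) (hn : 1 < n) (hpn : p < n) :
    (∫ t in Ioi (0:ℝ), (1 + t ^ n) ^ (-(1/p)))
      = (2 * ∫ t in (0:ℝ)..1, (1 - t ^ n) ^ (-(1/p)))
        / (2 * (Real.cos (π / n)
            - Real.sin (π / n) * (Real.cos (π / p) / Real.sin (π / p)))) :=
  stmt_9_general p n hp hpn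
end

section
/- For every integer n > 2: μ(n,n) = ν(n,n) = (1/4)·π_{n',n}·sec(π/n), where n' = n/(n-1) and π_{n',n} = 2∫₀¹ (1-t^n)^{-(n-1)/n} dt; that is, ∫₁^∞ (t^n-1)^{-(n-1)/n} dt = ∫₀^∞ (1+t^n)^{-(n-1)/n} dt = (1/2)·sec(π/n)·∫₀¹ (1-t^n)^{-(n-1)/n} dt. -/
open Real MeasureTheory Set

lemma betaIoo {a b : ℝ} (ha : 0 < a) (hb : 0 < b) :
    ∫ x in Ioo (0:ℝ) 1, x ^ (a-1) * (1-x) ^ (b-1)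
      = Real.Gamma a * Real.Gamma b / Real.Gamma (a+b) := by
  have key := Complex.Gamma_mul_Gamma_eq_betaIntegral (s := (a:ℂ)) (t := (b:ℂ))
    (by simpa using ha) (by simpa using hb)
  have h1 : Complex.betaIntegral a b
      = ((∫ x in (0:ℝ)..1, x ^ (a-1) * (1-x) ^ (b-1) : ℝ) : ℂ) := by
    rw [Complex.betaIntegral, ← intervalIntegral.integral_ofReal]
    apply intervalIntegral.integral_congr
    intro x hx
    rw [uIcc_of_le (by norm_num : (0:ℝ) ≤ 1)] at hx
    simp only []
    rw [Complex.ofReal_mul, Complex.ofReal_cpow hx.1,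
      Complex.ofReal_cpow (by linarith [hx.2] : (0:ℝ) ≤ 1 - x)]
    push_cast
    ring
  have hIoo : (∫ x in (0:ℝ)..1, x ^ (a-1) * (1-x) ^ (b-1) : ℝ)
      = ∫ x in Ioo (0:ℝ) 1, x ^ (a-1) * (1-x) ^ (b-1) := by
    rw [intervalIntegral.integral_of_le (by norm_num : (0:ℝ) ≤ 1),
      MeasureTheory.integral_Ioc_eq_integral_Ioo]
  rw [h1, hIoo] at key
  have hab : (0:ℝ) < Real.Gamma (a+b) := Real.Gamma_pos_of_pos (by linarith)
  have : ((Real.Gamma a * Real.Gamma b : ℝ) : ℂ)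
      = ((Real.Gamma (a+b) * ∫ x in Ioo (0:ℝ) 1, x ^ (a-1) * (1-x) ^ (b-1) : ℝ) : ℂ) := by
    push_cast
    rw [← Complex.Gamma_ofReal, ← Complex.Gamma_ofReal, ← Complex.Gamma_ofReal] at *
    push_cast at key ⊢
    rw [key]
  have := Complex.ofReal_inj.mp this
  field_simp
  linarith [this]

lemma halfSub (n : ℕ) (hn : 2 < n) :
    (∫ t in (0:ℝ)..1, (1 - t ^ n) ^ (-((n - 1 : ℝ)/n)))
      = (1/(n:ℝ)) * ∫ u in Ioo (0:ℝ) 1,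
          u ^ ((1:ℝ)/n - 1) * (1-u) ^ ((1:ℝ)/n - 1) := by
  have hN : (0:ℝ) < n := by positivity
  have hNne : (n:ℝ) ≠ 0 := hN.ne'
  set f : ℝ → ℝ := fun u => u ^ ((1:ℝ)/n) with hf
  have himg : f '' Ioo 0 1 = Ioo 0 1 := by
    ext t
    simp only [mem_image, mem_Ioo, hf]
    constructor
    · rintro ⟨u, ⟨h0, h1⟩, rfl⟩
      exact ⟨Real.rpow_pos_of_pos h0 _, Real.rpow_lt_one h0.le h1 (by positivity)⟩
    · rintro ⟨h0, h1⟩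
      refine ⟨t ^ (n:ℝ), ⟨Real.rpow_pos_of_pos h0 _, Real.rpow_lt_one h0.le h1 hN⟩, ?_⟩
      rw [← Real.rpow_mul h0.le, mul_one_div_cancel hNne, Real.rpow_one]
  have hder : ∀ u ∈ Ioo (0:ℝ) 1,
      HasDerivWithinAt f ((1/(n:ℝ)) * u ^ ((1:ℝ)/n - 1)) (Ioo 0 1) u := by
    intro u hu
    exact (Real.hasDerivAt_rpow_const (Or.inl hu.1.ne')).hasDerivWithinAt
  have hinj : InjOn f (Ioo 0 1) := by
    intro u hu v hv h
    rcases lt_trichotomy u v with h' | h' | h'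
    · exact absurd h (Real.rpow_lt_rpow hu.1.le h' (by positivity)).ne
    · exact h'
    · exact absurd h.symm (Real.rpow_lt_rpow hv.1.le h' (by positivity)).ne
  have key := integral_image_eq_integral_abs_deriv_smul measurableSet_Ioo hder hinj
    (fun t => (1 - t ^ n) ^ (-((n - 1 : ℝ)/n)))
  rw [himg] at key
  rw [intervalIntegral.integral_of_le (by norm_num : (0:ℝ) ≤ 1),
    MeasureTheory.integral_Ioc_eq_integral_Ioo, key,
    ← MeasureTheory.integral_const_mul]
  apply setIntegral_congr_fun measurableSet_Ioo
  intro u hu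
  have h0 := hu.1
  have h1 := hu.2
  have hun : (f u) ^ n = u := by
    rw [hf, ← Real.rpow_natCast (u ^ ((1:ℝ)/n)) n, ← Real.rpow_mul h0.le,
      one_div_mul_cancel hNne, Real.rpow_one]
  simp only [smul_eq_mul, hun]
  rw [abs_of_pos (by positivity),
    show -(((n:ℝ) - 1)/n) = (1:ℝ)/n - 1 by field_simp; ring]
  ring

lemma muSub (n : ℕ) (hn : 2 < n) :
    (∫ t in Ioi (1:ℝ), (t ^ n - 1) ^ (-((n - 1 : ℝ)/n)))
      = (1/(n:ℝ)) * ∫ u in Ioo (0:ℝ) 1,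
          u ^ (((n:ℝ)-2)/n - 1) * (1-u) ^ ((1:ℝ)/n - 1) := by
  have hN : (0:ℝ) < n := by positivity
  have hNne : (n:ℝ) ≠ 0 := hN.ne'
  set f : ℝ → ℝ := fun u => u ^ (-(1/(n:ℝ))) with hf
  have hback : ∀ w : ℝ, 0 < w → (f w) ^ (-(n:ℝ)) = w := by
    intro w hw
    rw [hf, ← Real.rpow_mul hw.le, show -(1/(n:ℝ)) * -(n:ℝ) = 1 by field_simp,
      Real.rpow_one]
  have himg : f '' Ioo 0 1 = Ioi 1 := by
    ext t
    simp only [mem_image, mem_Ioo, mem_Ioi, hf]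
    constructor
    · rintro ⟨u, ⟨h0, h1⟩, rfl⟩
      exact (Real.one_lt_rpow_iff_of_pos h0).mpr (Or.inr ⟨h1, neg_lt_zero.mpr (by positivity)⟩)
    · intro ht
      have ht0 : (0:ℝ) < t := by linarith
      refine ⟨t ^ (-(n:ℝ)), ⟨Real.rpow_pos_of_pos ht0 _,
        Real.rpow_lt_one_of_one_lt_of_neg ht (by simpa using hN)⟩, ?_⟩
      rw [← Real.rpow_mul ht0.le, show -(n:ℝ) * -(1/(n:ℝ)) = 1 by field_simp,
        Real.rpow_one]
  have hder : ∀ u ∈ Ioo (0:ℝ) 1,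
      HasDerivWithinAt f (-(1/(n:ℝ)) * u ^ (-(1/(n:ℝ)) - 1)) (Ioo 0 1) u := by
    intro u hu
    exact (Real.hasDerivAt_rpow_const (Or.inl hu.1.ne')).hasDerivWithinAt
  have hinj : InjOn f (Ioo 0 1) := by
    intro u hu v hv h
    rw [← hback u hu.1, ← hback v hv.1, h]
  have key := integral_image_eq_integral_abs_deriv_smul measurableSet_Ioo hder hinj
    (fun t => (t ^ n - 1) ^ (-((n - 1 : ℝ)/n)))
  rw [himg] at key
  rw [key, ← MeasureTheory.integral_const_mul]
  apply setIntegral_congr_fun measurableSet_Ioo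
  intro u hu
  have h0 := hu.1
  have h1u : (0:ℝ) < 1 - u := by linarith [hu.2]
  have hun : (f u) ^ n = u⁻¹ := by
    rw [hf, ← Real.rpow_natCast (u ^ (-(1/(n:ℝ)))) n, ← Real.rpow_mul h0.le,
      show -(1/(n:ℝ)) * (n:ℝ) = -1 by field_simp, Real.rpow_neg_one]
  simp only [smul_eq_mul, hun]
  rw [show (u⁻¹ - 1 : ℝ) = (1-u)/u by field_simp,
    Real.div_rpow h1u.le h0.le,
    Real.rpow_neg h0.le, div_inv_eq_mul, abs_mul, abs_neg,
    abs_of_pos (show (0:ℝ) < 1/(n:ℝ) by positivity),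
    abs_of_pos (Real.rpow_pos_of_pos h0 _),
    show ((n:ℝ)-2)/n - 1 = (-(1/(n:ℝ)) - 1) + ((n:ℝ)-1)/n by field_simp; ring,
    Real.rpow_add h0,
    show (1:ℝ)/n - 1 = -(((n:ℝ)-1)/n) by field_simp; ring]
  ring

lemma nuSub (n : ℕ) (hn : 2 < n) :
    (∫ t in Ioi (0:ℝ), (1 + t ^ n) ^ (-((n - 1 : ℝ)/n)))
      = (1/(n:ℝ)) * ∫ u in Ioo (0:ℝ) 1,
          u ^ ((1:ℝ)/n - 1) * (1-u) ^ (((n:ℝ)-2)/n - 1) := by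
  have hN : (0:ℝ) < n := by positivity
  have hNne : (n:ℝ) ≠ 0 := hN.ne'
  set f : ℝ → ℝ := fun u => (u/(1-u)) ^ ((1:ℝ)/n) with hf
  have hq : ∀ u ∈ Ioo (0:ℝ) 1, 0 < u/(1-u) := by
    intro u hu
    exact div_pos hu.1 (by linarith [hu.2])
  have hback : ∀ u ∈ Ioo (0:ℝ) 1, (f u) ^ (n:ℝ) = u/(1-u) := by
    intro u hu
    rw [hf, ← Real.rpow_mul (hq u hu).le, one_div_mul_cancel hNne, Real.rpow_one]
  have himg : f '' Ioo 0 1 = Ioi 0 := by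
    ext t
    simp only [mem_image, mem_Ioo, mem_Ioi, hf]
    constructor
    · rintro ⟨u, hu, rfl⟩
      exact Real.rpow_pos_of_pos (hq u hu) _
    · intro ht
      have hs : (0:ℝ) < t ^ (n:ℝ) := Real.rpow_pos_of_pos ht _
      refine ⟨t ^ (n:ℝ) / (1 + t ^ (n:ℝ)), ⟨by positivity,
        (div_lt_one (by linarith)).mpr (by linarith)⟩, ?_⟩
      rw [show t ^ (n:ℝ) / (1 + t ^ (n:ℝ)) / (1 - t ^ (n:ℝ) / (1 + t ^ (n:ℝ)))
            = t ^ (n:ℝ) by field_simp; ring,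
        ← Real.rpow_mul ht.le, mul_one_div_cancel hNne, Real.rpow_one]
  have hder : ∀ u ∈ Ioo (0:ℝ) 1,
      HasDerivWithinAt f
        ((1/(n:ℝ)) * (u/(1-u)) ^ ((1:ℝ)/n - 1) * (1/(1-u)^2)) (Ioo 0 1) u := by
    intro u hu
    have h1u : (0:ℝ) < 1 - u := by linarith [hu.2]
    have hd : HasDerivAt (fun u : ℝ => u/(1-u)) (1/(1-u)^2) u := by
      have := (hasDerivAt_id u).div
        ((hasDerivAt_const u (1:ℝ)).sub (hasDerivAt_id u)) h1u.ne'
      refine this.congr_deriv ?_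
      simp only [Pi.sub_apply, id]
      field_simp
      ring
    have h2 := (hd.rpow_const (p := (1:ℝ)/n)
      (Or.inl (hq u hu).ne')).hasDerivWithinAt (s := Ioo (0:ℝ) 1)
    refine h2.congr_deriv ?_
    ring
  have hinj : InjOn f (Ioo 0 1) := by
    intro u hu v hv h
    have h2 : u/(1-u) = v/(1-v) := by
      rw [← hback u hu, ← hback v hv, h]
    rw [div_eq_div_iff (by linarith [hu.2]) (by linarith [hv.2])] at h2
    ring_nf at h2
    linarith [h2]
  have key := integral_image_eq_integral_abs_deriv_smul measurableSet_Ioo hder hinj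
    (fun t => (1 + t ^ n) ^ (-((n - 1 : ℝ)/n)))
  rw [himg] at key
  rw [key, ← MeasureTheory.integral_const_mul]
  apply setIntegral_congr_fun measurableSet_Ioo
  intro u hu
  have h0 := hu.1
  have h1u : (0:ℝ) < 1 - u := by linarith [hu.2]
  have hun : (f u) ^ n = u/(1-u) := by
    rw [← hback u hu, Real.rpow_natCast]
  have hpos : (0:ℝ) < (1/(n:ℝ)) * (u/(1-u)) ^ ((1:ℝ)/n - 1) * (1/(1-u)^2) :=
    mul_pos (mul_pos (by positivity) (Real.rpow_pos_of_pos (hq u hu) _))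
      (one_div_pos.mpr (pow_pos h1u 2))
  simp only [smul_eq_mul, hun]
  rw [abs_of_pos hpos,
    show (1 + u/(1-u) : ℝ) = (1-u)⁻¹ by field_simp; ring,
    Real.inv_rpow h1u.le, Real.rpow_neg h1u.le, inv_inv,
    Real.div_rpow h0.le h1u.le,
    show ((1-u) : ℝ)^2 = (1-u) ^ ((2:ℝ)) by
      rw [← Real.rpow_natCast (1-u) 2]; norm_num,
    show ((n:ℝ)-1)/n = (((n:ℝ)-2)/n - 1) + ((1:ℝ)/n - 1) + (2:ℝ) by ring,
    Real.rpow_add h1u, Real.rpow_add h1u]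
  have e1 : ((1-u):ℝ) ^ ((1:ℝ)/n - 1) ≠ 0 := (Real.rpow_pos_of_pos h1u _).ne'
  have e2 : ((1-u):ℝ) ^ ((2:ℝ)) ≠ 0 := (Real.rpow_pos_of_pos h1u _).ne'
  field_simp

theorem stmt_10 (n : ℕ) (hn : 2 < n) :
    (∫ t in Ioi (1:ℝ), (t ^ n - 1) ^ (-((n - 1 : ℝ)/n)))
        = (∫ t in Ioi (0:ℝ), (1 + t ^ n) ^ (-((n - 1 : ℝ)/n)))
    ∧ (∫ t in Ioi (1:ℝ), (t ^ n - 1) ^ (-((n - 1 : ℝ)/n)))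
        = (1/2) * (1 / Real.cos (π / n))
            * ∫ t in (0:ℝ)..1, (1 - t ^ n) ^ (-((n - 1 : ℝ)/n)) := by
  have hN3 : (3:ℝ) ≤ (n:ℝ) := by exact_mod_cast hn
  have hN : (0:ℝ) < n := by linarith
  have hNne : (n:ℝ) ≠ 0 := hN.ne'
  have ha : (0:ℝ) < ((n:ℝ)-2)/n := div_pos (by linarith) hN
  have hb : (0:ℝ) < (1:ℝ)/n := by positivity
  have hmu := muSub n hn
  have hnu := nuSub n hn
  have hhalf := halfSub n hn
  rw [betaIoo ha hb, show ((n:ℝ)-2)/n + 1/n = ((n:ℝ)-1)/n by ring] at hmu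
  rw [betaIoo hb ha, show (1:ℝ)/n + ((n:ℝ)-2)/n = ((n:ℝ)-1)/n by ring] at hnu
  rw [betaIoo hb hb, show (1:ℝ)/n + 1/n = 2/(n:ℝ) by ring] at hhalf
  constructor
  · rw [hmu, hnu, mul_comm (Real.Gamma (((n:ℝ)-2)/n))]
  · rw [hmu, hhalf]
    have h1 := Real.Gamma_mul_Gamma_one_sub ((1:ℝ)/n)
    have h2 := Real.Gamma_mul_Gamma_one_sub ((2:ℝ)/n)
    rw [show (1:ℝ) - 1/n = ((n:ℝ)-1)/n by field_simp,
      show π * (1/(n:ℝ)) = π/n by ring] at h1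
    rw [show (1:ℝ) - 2/n = ((n:ℝ)-2)/n by field_simp,
      show π * (2/(n:ℝ)) = 2*(π/n) by ring, Real.sin_two_mul] at h2
    have hs : (0:ℝ) < Real.sin (π/n) := by
      apply Real.sin_pos_of_pos_of_lt_pi (by positivity)
      rw [div_lt_iff₀ hN]
      nlinarith [Real.pi_pos]
    have hc : (0:ℝ) < Real.cos (π/n) := by
      apply Real.cos_pos_of_mem_Ioo
      constructor
      · have : (0:ℝ) < π/n := by positivity
        linarith [Real.pi_pos]
      · rw [div_lt_iff₀ hN]
        nlinarith [Real.pi_pos]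
    have hG1 : (0:ℝ) < Real.Gamma (1/n) := Real.Gamma_pos_of_pos hb
    have hG2 : (0:ℝ) < Real.Gamma (2/n) := Real.Gamma_pos_of_pos (by positivity)
    have hGm1 : (0:ℝ) < Real.Gamma (((n:ℝ)-1)/n) := Real.Gamma_pos_of_pos (div_pos (by linarith) hN)
    have hGm2 : (0:ℝ) < Real.Gamma (((n:ℝ)-2)/n) := Real.Gamma_pos_of_pos ha
    have h3 : Real.Gamma (((n:ℝ)-2)/n) * Real.Gamma (2/n) * (2 * Real.cos (π/n))
        = Real.Gamma (((n:ℝ)-1)/n) * Real.Gamma (1/n) := by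
      have h4 : (π / (2 * Real.sin (π/n) * Real.cos (π/n))) * (2*Real.cos (π/n))
          = π / Real.sin (π/n) := by
        field_simp
      calc Real.Gamma (((n:ℝ)-2)/n) * Real.Gamma (2/n) * (2 * Real.cos (π/n))
          = (Real.Gamma (2/n) * Real.Gamma (((n:ℝ)-2)/n)) * (2*Real.cos (π/n)) := by
            ring
        _ = (π / (2 * Real.sin (π/n) * Real.cos (π/n))) * (2*Real.cos (π/n)) := by
            rw [h2]
        _ = π / Real.sin (π/n) := h4
        _ = Real.Gamma (1/n) * Real.Gamma (((n:ℝ)-1)/n) := h1.symm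
        _ = Real.Gamma (((n:ℝ)-1)/n) * Real.Gamma (1/n) := by ring
    field_simp
    linear_combination h3
end

section
/- For every integer n > 2: ∫₁^∞ (t^n - 1)^{-(n-1)/n} dt = ∫₀^∞ (1 + t^n)^{-(n-1)/n} dt. -/
open Real MeasureTheory Set

/-!
Substitute `t = (1 + x ^ n) ^ (1 / n)`, an increasing bijection from `(0, ∞)` onto `(1, ∞)`.
Then `t ^ n - 1 = x ^ n` and `dt = x ^ (n - 1) (1 + x ^ n) ^ (1 / n - 1) dx`, so the left integrand
becomes `x ^ (n - 1) (1 + x ^ n) ^ (-(n - 1) / n) · (x ^ n) ^ (-(n - 1) / n)`, and the two powers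
of `x` cancel.
-/

section

variable {n : ℕ}

theorem hasDerivAt_one_add_pow_rpow_inv (hn : n ≠ 0) {x : ℝ} (hx : 0 ≤ x) :
    HasDerivAt (fun y : ℝ => (1 + y ^ n) ^ (n⁻¹ : ℝ))
      (x ^ (n - 1) * (1 + x ^ n) ^ ((n⁻¹ : ℝ) - 1)) x := by
  have hpos : 0 < 1 + x ^ n := by positivity
  have h := ((hasDerivAt_pow n x).const_add 1).rpow_const (p := (n⁻¹ : ℝ)) (Or.inl hpos.ne')
  convert h using 1
  field_simp

theorem strictMonoOn_one_add_pow_rpow_inv (hn : n ≠ 0) :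
    StrictMonoOn (fun x : ℝ => (1 + x ^ n) ^ (n⁻¹ : ℝ)) (Ioi 0) := fun a ha b _ hab =>
  rpow_lt_rpow (by have := ha.out.le; positivity)
    (by have := pow_lt_pow_left₀ hab ha.out.le hn; linarith) (by positivity)

theorem image_one_add_pow_rpow_inv_Ioi_zero (hn : n ≠ 0) :
    (fun x : ℝ => (1 + x ^ n) ^ (n⁻¹ : ℝ)) '' Ioi 0 = Ioi 1 := by
  ext y
  constructor
  · rintro ⟨x, hx, rfl⟩
    have hx0 : 0 < x ^ n := pow_pos hx n
    exact one_lt_rpow (by linarith) (by positivity)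
  · intro (hy : 1 < y)
    have hyn : 1 < y ^ n := one_lt_pow₀ hy hn
    refine ⟨(y ^ n - 1) ^ (n⁻¹ : ℝ), rpow_pos_of_pos (by linarith) _, ?_⟩
    simp only [rpow_inv_natCast_pow (by linarith : 0 ≤ y ^ n - 1) hn, add_sub_cancel,
      pow_rpow_inv_natCast (by linarith : (0:ℝ) ≤ y) hn]

theorem integral_Ioi_one_eq_integral_Ioi_zero_comp_one_add_pow_rpow_inv
    {E : Type*} [NormedAddCommGroup E] [NormedSpace ℝ E] (hn : n ≠ 0) (g : ℝ → E) :
    ∫ t in Ioi (1:ℝ), g t = ∫ x in Ioi (0:ℝ),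
      (x ^ (n - 1) * (1 + x ^ n) ^ ((n⁻¹ : ℝ) - 1)) • g ((1 + x ^ n) ^ (n⁻¹ : ℝ)) := by
  rw [← image_one_add_pow_rpow_inv_Ioi_zero hn,
    integral_image_eq_integral_abs_deriv_smul measurableSet_Ioi
      (fun x hx => (hasDerivAt_one_add_pow_rpow_inv hn hx.out.le).hasDerivWithinAt)
      (strictMonoOn_one_add_pow_rpow_inv hn).injOn]
  refine setIntegral_congr_fun measurableSet_Ioi fun x hx => ?_
  have : 0 ≤ x := hx.out.le
  rw [abs_of_nonneg (by positivity)]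

theorem pow_rpow_neg_sub_one_div (hn : n ≠ 0) {x : ℝ} (hx : 0 ≤ x) :
    (x ^ n) ^ (-((n - 1 : ℝ) / n)) = (x ^ (n - 1))⁻¹ := by
  rw [rpow_neg (by positivity), div_eq_inv_mul, rpow_mul (by positivity),
    pow_rpow_inv_natCast hx hn, ← Nat.cast_pred (Nat.pos_of_ne_zero hn), rpow_natCast]

end

theorem stmt_11 (n : ℕ) (hn : 2 < n) :
    (∫ t in Ioi (1:ℝ), (t ^ n - 1) ^ (-((n - 1 : ℝ)/n)))
      = ∫ t in Ioi (0:ℝ), (1 + t ^ n) ^ (-((n - 1 : ℝ)/n)) := by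
  have hn0 : n ≠ 0 := by omega
  rw [integral_Ioi_one_eq_integral_Ioi_zero_comp_one_add_pow_rpow_inv hn0]
  refine setIntegral_congr_fun measurableSet_Ioi fun x hx => ?_
  have hx0 : 0 < x := hx
  have hexp : (n⁻¹ : ℝ) - 1 = -((n - 1 : ℝ) / n) := by
    field_simp
    ring
  rw [smul_eq_mul, rpow_inv_natCast_pow (by positivity) hn0, add_sub_cancel_left,
    pow_rpow_neg_sub_one_div hn0 hx0.le, hexp, mul_comm (x ^ (n - 1)), mul_assoc,
    mul_inv_cancel₀ (by positivity), mul_one]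
end

section
/- For real p > 1 and integer n > 1, the function sin_{p,n} satisfies the differential equation (sin_{p,n})'(x) = (1 - (sin_{p,n} x)^n)^{1/p} for x ∈ (0, π_{p,n}/2), with sin_{p,n}(0) = 0 and sin_{p,n}(π_{p,n}/2) = 1. -/
open Real MeasureTheory Set Topology

theorem stmt_14 (p : ℝ) (n : ℕ) (hp : 1 < p) (hn : 1 < n)
    (F : ℝ → ℝ) (hF : ∀ y, F y = ∫ t in (0:ℝ)..y, (1 - t ^ n) ^ (-(1/p)))
    (g : ℝ → ℝ)
    (hg1 : ∀ y ∈ Icc (0:ℝ) 1, g (F y) = y)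
    (hg2 : ∀ x ∈ Icc (0:ℝ) (F 1), F (g x) = x)
    (hg3 : MapsTo g (Icc (0:ℝ) (F 1)) (Icc (0:ℝ) 1)) :
    g 0 = 0 ∧ g (F 1) = 1 ∧
      ∀ x ∈ Ioo (0:ℝ) (F 1),
        HasDerivAt g ((1 - (g x) ^ n) ^ ((1:ℝ)/p)) x := by
  have hF0 : F 0 = 0 := by rw [hF]; exact intervalIntegral.integral_same
  have hne : n ≠ 0 := by omega
  -- positivity of 1 - y^n on Ioo 0 1 (in fact on Icc 0 y for y < 1)
  have hpos : ∀ t : ℝ, -1 < t → t < 1 → 0 < 1 - t ^ n := by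
    intro t ht ht1
    have h1 : |t| < 1 := abs_lt.2 ⟨ht, ht1⟩
    have h2 : t ^ n ≤ |t| ^ n := by
      rw [← abs_pow]; exact le_abs_self _
    have := pow_lt_one₀ (abs_nonneg t) h1 hne
    linarith
  -- derivative of F on Ioo 0 1
  have hFd : ∀ y ∈ Ioo (0:ℝ) 1, HasDerivAt F ((1 - y ^ n) ^ (-(1/p))) y := by
    intro y hy
    have hFeq : F = fun u => ∫ t in (0:ℝ)..u, (1 - t ^ n) ^ (-(1/p)) := funext hF
    rw [hFeq]
    have hca : ∀ t ∈ Ioo (-1:ℝ) 1,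
        ContinuousAt (fun t : ℝ => (1 - t ^ n) ^ (-(1/p))) t := by
      intro t ht
      exact ((continuous_const.sub (continuous_pow n)).continuousAt).rpow_const
        (Or.inl (ne_of_gt (hpos t ht.1 ht.2)))
    have hymem : y ∈ Ioo (-1:ℝ) 1 := ⟨by linarith [hy.1], hy.2⟩
    refine intervalIntegral.integral_hasDerivAt_right ?_ ?_ ?_
    · apply ContinuousOn.intervalIntegrable
      intro t ht
      rw [uIcc_of_le hy.1.le] at ht
      exact (hca t ⟨by linarith [ht.1], lt_of_le_of_lt ht.2 hy.2⟩).continuousWithinAt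
    · exact ContinuousAt.stronglyMeasurableAtFilter isOpen_Ioo hca y hymem
    · exact hca y hymem
  -- F is strictly monotone on Ioo 0 1
  have hFmono : StrictMonoOn F (Ioo (0:ℝ) 1) := by
    apply strictMonoOn_of_deriv_pos (convex_Ioo 0 1)
    · exact fun y hy => (hFd y hy).continuousAt.continuousWithinAt
    · intro y hy
      rw [interior_Ioo] at hy
      rw [(hFd y hy).deriv]
      exact rpow_pos_of_pos (hpos y (by linarith [hy.1]) hy.2) _
  refine ⟨?_, ?_, ?_⟩
  · have := hg1 0 ⟨le_refl 0, zero_le_one⟩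
    rwa [hF0] at this
  · exact hg1 1 ⟨zero_le_one, le_refl 1⟩
  · intro x hx
    have hxIcc : x ∈ Icc (0:ℝ) (F 1) := ⟨hx.1.le, hx.2.le⟩
    -- g x ∈ Ioo 0 1
    have hmem : ∀ z ∈ Ioo (0:ℝ) (F 1), g z ∈ Ioo (0:ℝ) 1 := by
      intro z hz
      have hzIcc : z ∈ Icc (0:ℝ) (F 1) := ⟨hz.1.le, hz.2.le⟩
      have h1 := hg3 hzIcc
      rcases lt_or_eq_of_le h1.1 with h | h
      · rcases lt_or_eq_of_le h1.2 with h2 | h2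
        · exact ⟨h, h2⟩
        · exfalso
          have : F (g z) = z := hg2 z hzIcc
          rw [h2] at this
          exact absurd this.symm (ne_of_lt hz.2)
      · exfalso
        have : F (g z) = z := hg2 z hzIcc
        rw [← h, hF0] at this
        exact absurd this.symm (ne_of_gt hz.1)
    have hgx : g x ∈ Ioo (0:ℝ) 1 := hmem x hx
    have hb : 0 < 1 - (g x) ^ n := hpos _ (by linarith [hgx.1]) hgx.2
    have hd : HasDerivAt F ((1 - (g x) ^ n) ^ (-(1/p))) (g x) := hFd _ hgx
    have hdne : (1 - (g x) ^ n) ^ (-(1/p)) ≠ 0 := ne_of_gt (rpow_pos_of_pos hb _)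
    -- g is strictly monotone on Ioo 0 (F 1)
    have hgmono : StrictMonoOn g (Ioo (0:ℝ) (F 1)) := by
      intro a ha b hb' hab
      by_contra hcon
      push_neg at hcon
      have : F (g b) ≤ F (g a) := by
        rcases lt_or_eq_of_le hcon with h | h
        · exact (hFmono (hmem b hb') (hmem a ha) h).le
        · rw [h]
      rw [hg2 a ⟨ha.1.le, ha.2.le⟩, hg2 b ⟨hb'.1.le, hb'.2.le⟩] at this
      exact absurd hab (not_lt.2 this)
    -- continuity of g at x
    have himg : g '' (Ioo (0:ℝ) (F 1)) ∈ 𝓝 (g x) := by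
      have hFgx : F (g x) = x := hg2 x hxIcc
      have h1 : ∀ᶠ y in 𝓝 (g x), F y ∈ Ioo (0:ℝ) (F 1) :=
        (hd.continuousAt).preimage_mem_nhds (isOpen_Ioo.mem_nhds (by rw [hFgx]; exact hx))
      have h2 : ∀ᶠ y in 𝓝 (g x), y ∈ Ioo (0:ℝ) 1 := isOpen_Ioo.mem_nhds hgx
      rw [← Filter.eventually_mem_set]
      filter_upwards [h1, h2] with y hy1 hy2
      exact ⟨F y, hy1, hg1 y ⟨hy2.1.le, hy2.2.le⟩⟩
    have hcont : ContinuousAt g x :=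
      hgmono.continuousAt_of_image_mem_nhds (isOpen_Ioo.mem_nhds hx) himg
    have hloc : ∀ᶠ y in 𝓝 x, F (g y) = y := by
      filter_upwards [isOpen_Ioo.mem_nhds hx] with y hy
      exact hg2 y ⟨hy.1.le, hy.2.le⟩
    have hgd : HasDerivAt g (((1 - (g x) ^ n) ^ (-(1/p)))⁻¹) x :=
      hd.of_local_left_inverse hcont hdne hloc
    have heq : ((1 - (g x) ^ n) ^ (-(1/p)))⁻¹ = (1 - (g x) ^ n) ^ ((1:ℝ)/p) := by
      rw [rpow_neg hb.le, inv_inv]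
    rwa [heq] at hgd
end

section
/- For integer m > 1 and integer n > 1 with n ≥ 2 and (m,n) ≠ (2,2) — assume m/(m-1) < n — define p = m/(m-1) (so p' = m). Then the asymptotic F_{p,n}(1) - F_{p,n}(y) ~ (p'/n^{1/p})·(1-y)^{1/p'} holds as y → 1⁻; equivalently π_{p,n}/2 - F_{p,n}(y) = (1-y)^{1/p'}·g(y) for a function g continuous and positive at y = 1. -/
open Real MeasureTheory Set Filter Topology

/-!
Near `t = 1` the integrand is `(1 - t ^ n) ^ (-q) = ((1 - t ^ n) / (1 - t)) ^ (-q) * (1 - t) ^ (-q)`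
with `q = 1/p`, and the first factor tends to `n ^ (-q)` since `n` is the derivative of `t ^ n`
at `1`. L'Hôpital's rule, applied to the tail integral against `(1 - y) ^ (1 - q)`, whose
derivative is `-(1 - q) (1 - y) ^ (-q)`, gives the limit `n ^ (-q) / (1 - q) = p' n ^ (-1/p)`.
-/

theorem tendsto_one_sub_pow_div_one_sub (n : ℕ) :
    Tendsto (fun t : ℝ => (1 - t ^ n) / (1 - t)) (𝓝[<] 1) (𝓝 n) := by
  have h := (hasDerivAt_iff_tendsto_slope_left_right.1 (hasDerivAt_pow n (1 : ℝ))).1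
  simp only [one_pow, mul_one, slope_fun_def_field] at h
  refine h.congr fun t => ?_
  rw [← neg_div_neg_eq, neg_sub, neg_sub]

theorem intervalIntegrable_one_sub_pow_rpow_neg {n : ℕ} (hn : n ≠ 0) {q : ℝ}
    (hq₀ : 0 ≤ q) (hq₁ : q < 1) :
    IntervalIntegrable (fun t : ℝ => (1 - t ^ n) ^ (-q)) volume 0 1 := by
  have hmajorant : IntervalIntegrable (fun t : ℝ => (1 - t) ^ (-q)) volume 0 1 := by
    simpa using ((intervalIntegral.intervalIntegrable_rpow' (a := 0) (b := 1)
      (r := -q) (by linarith)).comp_sub_left 1).symm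
  refine hmajorant.mono_fun ?_ ?_
  · exact ((measurable_const.sub (measurable_id.pow_const n)).pow_const _).aestronglyMeasurable
  filter_upwards [ae_restrict_mem measurableSet_uIoc] with t ht
  rw [uIoc_of_le zero_le_one] at ht
  have htn : t ^ n ≤ t := pow_le_of_le_one ht.1.le ht.2 hn
  rw [norm_of_nonneg (rpow_nonneg (by linarith [pow_le_one₀ ht.1.le ht.2 (n := n)]) _),
    norm_of_nonneg (rpow_nonneg (by linarith [ht.2]) _)]
  rcases ht.2.eq_or_lt with rfl | ht1
  · simp
  · exact rpow_le_rpow_of_nonpos (by linarith) (by linarith) (by linarith)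

theorem tendsto_integral_div_rpow_of_tendsto_div_rpow {f : ℝ → ℝ} {a b q L : ℝ} (hab : a < b)
    (hq : q < 1) (hf : IntervalIntegrable f volume a b) (hcont : ContinuousOn f (Ioo a b))
    (hlim : Tendsto (fun t => f t / (b - t) ^ (-q)) (𝓝[<] b) (𝓝 L)) :
    Tendsto (fun y => (∫ t in y..b, f t) / (b - y) ^ (1 - q)) (𝓝[<] b) (𝓝 (L / (1 - q))) := by
  have hIoo : Ioo a b ∈ 𝓝[<] b := Ioo_mem_nhdsLT hab
  have hpos : ∀ y ∈ Ioo a b, 0 < (b - y) ^ (-q) := fun y hy =>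
    rpow_pos_of_pos (sub_pos.2 hy.2) _
  have hnum : Tendsto (fun y => ∫ t in y..b, f t) (𝓝[<] b) (𝓝 0) := by
    have h := intervalIntegral.continuousOn_primitive_interval_left
      ((intervalIntegrable_iff' ..).1 hf) b right_mem_uIcc
    rw [← nhdsWithin_Ioo_eq_nhdsLT hab]
    simpa using (h.mono (Ioo_subset_Icc_self.trans Icc_subset_uIcc)).tendsto
  have hden : Tendsto (fun y => (b - y) ^ (1 - q)) (𝓝[<] b) (𝓝 0) := by
    have h : Tendsto (fun y => b - y) (𝓝[<] b) (𝓝 0) := by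
      simpa using ((continuous_sub_left b).tendsto b).mono_left (nhdsWithin_le_nhds (s := Iio b))
    simpa [zero_rpow (sub_ne_zero.2 hq.ne')] using h.rpow_const (p := 1 - q) (Or.inr (by linarith))
  refine HasDerivAt.lhopital_zero_nhdsLT (f' := fun y => -f y)
    (g' := fun y => -(1 - q) * (b - y) ^ (-q)) ?_ ?_ ?_ hnum hden ?_
  · filter_upwards [hIoo] with y hy
    exact intervalIntegral.integral_hasDerivAt_left (hf.mono_set (uIcc_subset_uIcc
      (Ioo_subset_Icc_self.trans Icc_subset_uIcc hy) right_mem_uIcc))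
      (hcont.stronglyMeasurableAtFilter isOpen_Ioo y hy)
      (hcont.continuousAt (isOpen_Ioo.mem_nhds hy))
  · filter_upwards [hIoo] with y hy
    have h := ((hasDerivAt_id' y).const_sub b).rpow_const (p := 1 - q)
      (Or.inl (sub_ne_zero.2 hy.2.ne'))
    rwa [sub_sub_cancel_left, neg_one_mul] at h
  · filter_upwards [hIoo] with y hy
    exact mul_ne_zero (neg_ne_zero.2 (by linarith)) (hpos y hy).ne'
  · refine (hlim.div_const (1 - q)).congr' ?_
    filter_upwards [hIoo] with y hy
    have := hpos y hy
    have : 1 - q ≠ 0 := by linarith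
    field_simp

theorem tendsto_integral_one_sub_pow_rpow_neg_div {n : ℕ} (hn : n ≠ 0) {q : ℝ}
    (hq₀ : 0 ≤ q) (hq₁ : q < 1) :
    Tendsto (fun y => (∫ t in y..1, (1 - t ^ n) ^ (-q)) / (1 - y) ^ (1 - q)) (𝓝[<] 1)
      (𝓝 ((n : ℝ) ^ (-q) / (1 - q))) := by
  have hpos : ∀ t ∈ Ioo (0 : ℝ) 1, 0 < 1 - t ^ n := fun t ht =>
    sub_pos.2 (pow_lt_one₀ ht.1.le ht.2 hn)
  refine tendsto_integral_div_rpow_of_tendsto_div_rpow zero_lt_one hq₁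
    (intervalIntegrable_one_sub_pow_rpow_neg hn hq₀ hq₁) ?_ ?_
  · exact fun t ht => ((continuous_const.sub (continuous_pow n)).continuousAt.rpow_const
      (Or.inl (hpos t ht).ne')).continuousWithinAt
  · refine ((tendsto_one_sub_pow_div_one_sub n).rpow_const
      (Or.inl (Nat.cast_ne_zero.2 hn))).congr' ?_
    filter_upwards [Ioo_mem_nhdsLT zero_lt_one] with t ht
    exact div_rpow (hpos t ht).le (sub_pos.2 ht.2).le _

theorem stmt_16_general (m n : ℕ) (hm : 1 < m) (hn : 1 < n)
    (p : ℝ) (hp : p = (m : ℝ) / ((m : ℝ) - 1))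
    (F : ℝ → ℝ) (hF : ∀ y, F y = ∫ t in (0:ℝ)..y, (1 - t ^ n) ^ (-(1/p))) :
    Tendsto (fun y : ℝ => (F 1 - F y) / (1 - y) ^ ((1:ℝ)/(m:ℝ)))
      (nhdsWithin 1 (Iio 1))
      (nhds ((m : ℝ) * ((n : ℝ) ^ (-(1/p))))) := by
  have hm' : (1 : ℝ) < m := by exact_mod_cast hm
  have hq : 1 - 1 / p = 1 / m := by
    rw [hp]
    field_simp
    ring
  have hq₀ : 0 ≤ 1 / p := by
    have : 1 / (m : ℝ) ≤ 1 := (div_le_one (by linarith)).2 hm'.le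
    linarith
  have hq₁ : 1 / p < 1 := by
    have : 0 < 1 / (m : ℝ) := by positivity
    linarith
  have hn0 : n ≠ 0 := by omega
  have hint := intervalIntegrable_one_sub_pow_rpow_neg hn0 hq₀ hq₁
  have h := tendsto_integral_one_sub_pow_rpow_neg_div hn0 hq₀ hq₁
  rw [hq, div_div_eq_mul_div, div_one, mul_comm] at h
  refine h.congr' ?_
  filter_upwards [Ioo_mem_nhdsLT zero_lt_one] with y hy
  rw [hF, hF, intervalIntegral.integral_interval_sub_left hint
    (hint.mono_set (uIcc_subset_uIcc left_mem_uIcc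
      (Ioo_subset_Icc_self.trans Icc_subset_uIcc hy)))]

theorem stmt_16 (m n : ℕ) (hm : 1 < m) (hn : 1 < n)
    (hne : ¬(m = 2 ∧ n = 2))
    (p : ℝ) (hp : p = (m : ℝ) / ((m : ℝ) - 1)) (hpn : p < n)
    (F : ℝ → ℝ) (hF : ∀ y, F y = ∫ t in (0:ℝ)..y, (1 - t ^ n) ^ (-(1/p))) :
    Tendsto (fun y : ℝ => (F 1 - F y) / (1 - y) ^ ((1:ℝ)/(m:ℝ)))
      (nhdsWithin 1 (Iio 1))
      (nhds ((m : ℝ) * ((n : ℝ) ^ (-(1/p))))) :=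
  stmt_16_general m n hm hn p hp F hF
end

section
/- For n = 2 and p = 3/2 (so p' = 3): μ(3,2) = ∫₁^∞ (t² - 1)^{-2/3} dt equals π_{3/2,2}/(2(sin(2π/3)·cot(π/2) - cos(2π/3))) = π_{3/2,2}, i.e., ∫₁^∞ (t²-1)^{-2/3} dt = 2∫₀¹ (1-t²)^{-2/3} dt. -/
open Real MeasureTheory Set

lemma Jb_eq {a b : ℝ} (ha : 0 < a) (hb : 0 < b) :
    (∫ x in Ioo (0:ℝ) 1, x ^ (a-1) * (1-x) ^ (b-1))
      = Real.Gamma a * Real.Gamma b / Real.Gamma (a+b) := by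
  have h1 : ((∫ x in Ioo (0:ℝ) 1, x ^ (a-1) * (1-x) ^ (b-1) : ℝ) : ℂ)
      = Complex.betaIntegral a b := by
    rw [Complex.betaIntegral, intervalIntegral.integral_of_le (by norm_num : (0:ℝ) ≤ 1),
      MeasureTheory.integral_Ioc_eq_integral_Ioo]
    rw [show ((∫ x in Ioo (0:ℝ) 1, x ^ (a-1) * (1-x) ^ (b-1) : ℝ) : ℂ)
        = ∫ x in Ioo (0:ℝ) 1, ((x ^ (a-1) * (1-x) ^ (b-1) : ℝ) : ℂ) from integral_ofReal.symm]
    refine setIntegral_congr_fun measurableSet_Ioo fun x hx => ?_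
    push_cast
    rw [Complex.ofReal_cpow hx.1.le, Complex.ofReal_cpow (by linarith [hx.2] : (0:ℝ) ≤ 1 - x)]
    push_cast
    ring
  have h2 := Complex.Gamma_mul_Gamma_eq_betaIntegral
    (s := (a:ℂ)) (t := (b:ℂ)) (by simpa using ha) (by simpa using hb)
  rw [← h1, ← Complex.ofReal_add, Complex.Gamma_ofReal, Complex.Gamma_ofReal,
    Complex.Gamma_ofReal, ← Complex.ofReal_mul, ← Complex.ofReal_mul] at h2
  have h3 : Real.Gamma a * Real.Gamma b
      = Real.Gamma (a+b) * ∫ x in Ioo (0:ℝ) 1, x ^ (a-1) * (1-x) ^ (b-1) :=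
    Complex.ofReal_injective h2
  have h4 : Real.Gamma (a+b) ≠ 0 := (Real.Gamma_pos_of_pos (by linarith)).ne'
  field_simp
  linarith [h3]

lemma subst_sq (g : ℝ → ℝ) :
    ∫ x in Ioo (0:ℝ) 1, g x = ∫ u in Ioo (0:ℝ) 1, |2*u| * g (u^2) := by
  have himg : (fun u : ℝ => u^2) '' Ioo 0 1 = Ioo 0 1 := by
    ext t
    simp only [mem_image, mem_Ioo]
    constructor
    · rintro ⟨u, ⟨h0, h1⟩, rfl⟩
      exact ⟨by positivity, by nlinarith⟩
    · rintro ⟨h0, h1⟩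
      exact ⟨Real.sqrt t, ⟨Real.sqrt_pos.2 h0, by
        rw [show (1:ℝ) = Real.sqrt 1 by simp]
        exact Real.sqrt_lt_sqrt h0.le h1⟩, Real.sq_sqrt h0.le⟩
  have hderiv : ∀ x ∈ Ioo (0:ℝ) 1, HasDerivWithinAt (fun u : ℝ => u^2) (2*x) (Ioo 0 1) x := by
    intro x hx
    simpa using (hasDerivAt_pow 2 x).hasDerivWithinAt
  have hinj : InjOn (fun u : ℝ => u^2) (Ioo 0 1) := by
    intro x hx y hy h
    simp only at h
    nlinarith [hx.1, hy.1]
  have := integral_image_eq_integral_abs_deriv_smul measurableSet_Ioo hderiv hinj g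
  rw [himg] at this
  simpa [smul_eq_mul] using this

lemma subst_inv :
    (∫ t in Ioi (1:ℝ), (t ^ 2 - 1) ^ (-(2/3 : ℝ)))
      = ∫ x in Ioo (0:ℝ) 1, x ^ (-(2/3):ℝ) * (1 - x^2) ^ (-(2/3):ℝ) := by
  have himg : (fun x : ℝ => x⁻¹) '' Ioo 0 1 = Ioi 1 := by
    ext t
    simp only [mem_image, mem_Ioo, mem_Ioi]
    constructor
    · rintro ⟨x, ⟨h0, h1⟩, rfl⟩
      exact ((one_lt_inv₀ h0).2 h1)
    · intro ht
      have ht0 : 0 < t := lt_trans one_pos ht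
      exact ⟨t⁻¹, ⟨inv_pos.2 ht0, inv_lt_one_of_one_lt₀ ht⟩, inv_inv t⟩
  have hderiv : ∀ x ∈ Ioo (0:ℝ) 1, HasDerivWithinAt (fun x : ℝ => x⁻¹) (-(x^2)⁻¹) (Ioo 0 1) x :=
    fun x hx => (hasDerivAt_inv hx.1.ne').hasDerivWithinAt
  have hinj : InjOn (fun x : ℝ => x⁻¹) (Ioo 0 1) := fun x _ y _ h => inv_injective h
  have H := integral_image_eq_integral_abs_deriv_smul measurableSet_Ioo hderiv hinj
    (fun t => (t ^ 2 - 1) ^ (-(2/3 : ℝ)))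
  rw [himg] at H
  rw [H]
  refine setIntegral_congr_fun measurableSet_Ioo fun x hx => ?_
  obtain ⟨h0, h1⟩ := hx
  have hx2 : (0:ℝ) < x^2 := by positivity
  have h1x2 : (0:ℝ) ≤ 1 - x^2 := by nlinarith
  rw [smul_eq_mul, abs_neg, abs_inv, abs_of_pos hx2]
  have e1 : (x⁻¹) ^ 2 - 1 = (1 - x^2) / x^2 := by field_simp
  rw [e1, Real.div_rpow h1x2 hx2.le]
  have e2 : (x^2 : ℝ) ^ (-(2/3) : ℝ) = x ^ (-(4/3) : ℝ) := by
    rw [← Real.rpow_natCast x 2, ← Real.rpow_mul h0.le]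
    norm_num
  have e3 : ((x^2)⁻¹ : ℝ) = x ^ (-(2:ℝ)) := by
    rw [← Real.rpow_natCast x 2, ← Real.rpow_neg h0.le]
    norm_num
  rw [e2, e3, div_eq_mul_inv, ← Real.rpow_neg h0.le]
  rw [show (- -(4/3) : ℝ) = 4/3 by norm_num]
  rw [mul_comm ((1-x^2)^(-(2/3):ℝ)), ← mul_assoc, ← Real.rpow_add h0]
  norm_num

theorem stmt_17 :
    (∫ t in Ioi (1:ℝ), (t ^ 2 - 1) ^ (-(2/3 : ℝ)))
      = 2 * ∫ t in (0:ℝ)..1, (1 - t ^ 2) ^ (-(2/3 : ℝ)) := by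
  -- rewrite both sides via Beta integrals
  have hJ16 : (∫ x in Ioo (0:ℝ) 1, x ^ ((1/6:ℝ)-1) * (1-x) ^ ((1/3:ℝ)-1))
      = 2 * ∫ x in Ioo (0:ℝ) 1, x ^ (-(2/3):ℝ) * (1 - x^2) ^ (-(2/3):ℝ) := by
    rw [subst_sq (fun x => x ^ ((1/6:ℝ)-1) * (1-x) ^ ((1/3:ℝ)-1)),
      ← MeasureTheory.integral_const_mul]
    refine setIntegral_congr_fun measurableSet_Ioo fun u hu => ?_
    obtain ⟨h0, h1⟩ := hu
    have e2 : ((u^2 : ℝ)) ^ ((1/6:ℝ)-1) = u ^ (-(5/3) : ℝ) := by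
      rw [← Real.rpow_natCast u 2, ← Real.rpow_mul h0.le]
      norm_num
    have habs : |2*u| = 2*u := abs_of_pos (by linarith)
    rw [habs, e2, show ((1/3:ℝ)-1) = -(2/3 : ℝ) by norm_num]
    have key : u * u ^ (-(5/3) : ℝ) = u ^ (-(2/3) : ℝ) := by
      nth_rewrite 1 [← Real.rpow_one u]
      rw [← Real.rpow_add h0]
      norm_num
    rw [← key]
    ring
  have hJ12 : (∫ x in Ioo (0:ℝ) 1, x ^ ((1/2:ℝ)-1) * (1-x) ^ ((1/3:ℝ)-1))
      = 2 * ∫ x in Ioo (0:ℝ) 1, (1 - x^2) ^ (-(2/3):ℝ) := by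
    rw [subst_sq (fun x => x ^ ((1/2:ℝ)-1) * (1-x) ^ ((1/3:ℝ)-1)),
      ← MeasureTheory.integral_const_mul]
    refine setIntegral_congr_fun measurableSet_Ioo fun u hu => ?_
    obtain ⟨h0, h1⟩ := hu
    have e2 : ((u^2 : ℝ)) ^ ((1/2:ℝ)-1) = u ^ (-(1:ℝ)) := by
      rw [← Real.rpow_natCast u 2, ← Real.rpow_mul h0.le]
      norm_num
    have habs : |2*u| = 2*u := abs_of_pos (by linarith)
    rw [habs, e2, show ((1/3:ℝ)-1) = -(2/3 : ℝ) by norm_num]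
    have key : u * u ^ (-(1:ℝ)) = 1 := by
      nth_rewrite 1 [← Real.rpow_one u]
      rw [← Real.rpow_add h0]
      norm_num
    calc 2*u * (u ^ (-(1:ℝ)) * (1-u^2) ^ (-(2/3):ℝ))
        = 2 * (u * u ^ (-(1:ℝ))) * (1-u^2) ^ (-(2/3):ℝ) := by ring
      _ = 2 * (1-u^2) ^ (-(2/3):ℝ) := by rw [key]; ring
  have hRHS : (∫ t in (0:ℝ)..1, (1 - t ^ 2) ^ (-(2/3 : ℝ)))
      = ∫ x in Ioo (0:ℝ) 1, (1 - x^2) ^ (-(2/3):ℝ) := by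
    rw [intervalIntegral.integral_of_le (by norm_num : (0:ℝ) ≤ 1),
      MeasureTheory.integral_Ioc_eq_integral_Ioo]
  -- Gamma values
  have g16 := Jb_eq (a := 1/6) (b := 1/3) (by norm_num) (by norm_num)
  have g12 := Jb_eq (a := 1/2) (b := 1/3) (by norm_num) (by norm_num)
  rw [show (1/6 + 1/3 : ℝ) = 1/2 by norm_num] at g16
  rw [show (1/2 + 1/3 : ℝ) = 5/6 by norm_num] at g12
  have hrefl : Real.Gamma (1/6) * Real.Gamma (5/6) = 2 * π := by
    have := Real.Gamma_mul_Gamma_one_sub (1/6)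
    rw [show (1 - 1/6 : ℝ) = 5/6 by norm_num, show (π * (1/6) : ℝ) = π/6 by ring,
      Real.sin_pi_div_six] at this
    rw [this]; ring
  have ghalf : Real.Gamma (1/2) * Real.Gamma (1/2) = π := by
    rw [Real.Gamma_one_half_eq]
    exact Real.mul_self_sqrt pi_pos.le
  have p16 : (0:ℝ) < Real.Gamma (1/6) := Real.Gamma_pos_of_pos (by norm_num)
  have p13 : (0:ℝ) < Real.Gamma (1/3) := Real.Gamma_pos_of_pos (by norm_num)
  have p12 : (0:ℝ) < Real.Gamma (1/2) := Real.Gamma_pos_of_pos (by norm_num)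
  have p56 : (0:ℝ) < Real.Gamma (5/6) := Real.Gamma_pos_of_pos (by norm_num)
  rw [subst_inv, hRHS]
  rw [hJ16] at g16
  rw [hJ12] at g12
  rw [show (∫ x in Ioo (0:ℝ) 1, x ^ (-(2/3):ℝ) * (1 - x^2) ^ (-(2/3):ℝ))
      = Real.Gamma (1/6) * Real.Gamma (1/3) / Real.Gamma (1/2) / 2 by linarith,
    show (2 * ∫ x in Ioo (0:ℝ) 1, (1 - x^2) ^ (-(2/3):ℝ))
      = Real.Gamma (1/2) * Real.Gamma (1/3) / Real.Gamma (5/6) from g12]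
  field_simp
  nlinarith [hrefl, ghalf, p13.le, mul_pos p16 p56]
end

section
/- For p = 3/2 and n = 3 (so p' = 3 = n): μ(3,3) = ν(3,3) = (1/4)·π_{3/2,3}·sec(π/3) = (1/2)·π_{3/2,3}; i.e., ∫₁^∞ (t³-1)^{-2/3} dt = ∫₀^∞ (1+t³)^{-2/3} dt = ∫₀¹ (1-t³)^{-2/3} dt. -/
/-!
The substitution `t = 1 / x` turns `∫₁^∞ (t ^ n - 1) ^ (-p)` into `∫₀¹ x ^ (n p - 2) (1 - x ^ n) ^ (-p)`,
and the diffeomorphism `x ↦ x (1 - x ^ n) ^ (-1/n)` of `(0, 1)` onto `(0, ∞)`, for which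
`1 + t ^ n = (1 - x ^ n)⁻¹` and `dt = (1 - x ^ n) ^ (-1/n - 1) dx`, turns `∫₀^∞ (1 + t ^ n) ^ (-p)` into
`∫₀¹ (1 - x ^ n) ^ (p - 1/n - 1)`. For `n = 3`, `p = 2/3` both integrands become `(1 - x ^ 3) ^ (-2/3)`.
-/

open Real MeasureTheory Set

lemma one_sub_pow_pos_of_mem_Ioo {x : ℝ} (hx : x ∈ Ioo 0 1) {n : ℕ} (hn : n ≠ 0) :
    0 < 1 - x ^ n := by
  linarith [pow_lt_one₀ hx.1.le hx.2 hn]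

lemma rpow_neg_inv_natCast_pow {a : ℝ} (ha : 0 ≤ a) {n : ℕ} (hn : n ≠ 0) :
    (a ^ (-(n : ℝ)⁻¹)) ^ n = a⁻¹ := by
  rw [rpow_neg ha, inv_pow, rpow_inv_natCast_pow ha hn]

lemma setIntegral_Ioi_one_pow_sub_one_rpow {n : ℕ} (hn : n ≠ 0) (p : ℝ) :
    ∫ t in Ioi (1 : ℝ), (t ^ n - 1) ^ (-p)
      = ∫ x in Ioo (0 : ℝ) 1, x ^ (n * p - 2) * (1 - x ^ n) ^ (-p) := by
  have hderiv : ∀ x ∈ Ioo (0 : ℝ) 1,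
      HasDerivWithinAt (fun x : ℝ => x⁻¹) (-(x ^ 2)⁻¹) (Ioo 0 1) x :=
    fun x hx => (hasDerivAt_inv hx.1.ne').hasDerivWithinAt
  have hinj : InjOn (fun x : ℝ => x⁻¹) (Ioo 0 1) := inv_injective.injOn
  have hcov := integral_image_eq_integral_abs_deriv_smul measurableSet_Ioo hderiv hinj
    (fun t : ℝ => (t ^ n - 1) ^ (-p))
  rw [image_inv_eq_inv, inv_Ioo_0_left one_pos, inv_one] at hcov
  rw [hcov]
  refine setIntegral_congr_fun measurableSet_Ioo fun x hx => ?_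
  have hx0 := hx.1
  have hu := one_sub_pow_pos_of_mem_Ioo hx hn
  have hsub : x⁻¹ ^ n - 1 = (1 - x ^ n) / x ^ n := by
    rw [inv_pow]
    field_simp
  have hpow : (x ^ n) ^ (-p) = (x ^ (n * p))⁻¹ := by
    rw [rpow_natCast_mul hx0.le, rpow_neg (by positivity)]
  simp only [smul_eq_mul]
  rw [hsub, div_rpow hu.le (by positivity), hpow, abs_neg, abs_of_pos (by positivity),
    rpow_sub hx0, rpow_two]
  field_simp

noncomputable def stretch (n : ℕ) (x : ℝ) : ℝ := x * (1 - x ^ n) ^ (-(n : ℝ)⁻¹)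

lemma one_add_stretch_pow {n : ℕ} (hn : n ≠ 0) {x : ℝ} (hx : x ^ n < 1) :
    1 + stretch n x ^ n = (1 - x ^ n)⁻¹ := by
  have hu : 0 < 1 - x ^ n := by linarith
  rw [stretch, mul_pow, rpow_neg_inv_natCast_pow hu.le hn]
  field_simp
  ring

lemma hasDerivAt_stretch {n : ℕ} (hn : n ≠ 0) {x : ℝ} (hx : x ^ n < 1) :
    HasDerivAt (stretch n) ((1 - x ^ n) ^ (-(n : ℝ)⁻¹ - 1)) x := by
  have hu : 0 < 1 - x ^ n := by linarith
  have hpow : HasDerivAt (fun x : ℝ => (1 - x ^ n) ^ (-(n : ℝ)⁻¹))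
      (-(n * x ^ (n - 1)) * -(n : ℝ)⁻¹ * (1 - x ^ n) ^ (-(n : ℝ)⁻¹ - 1)) x :=
    (by simpa using (hasDerivAt_pow n x).const_sub 1 : HasDerivAt (fun x : ℝ => 1 - x ^ n) _ x)
      |>.rpow_const (Or.inl hu.ne')
  refine ((hasDerivAt_id x).mul hpow).congr_deriv ?_
  -- the two terms combine because `(1 - x ^ n) + x ^ n = 1`
  rw [← sub_add_cancel (-(n : ℝ)⁻¹) 1, rpow_add_one hu.ne', add_sub_cancel_right, id,
    ← mul_pow_sub_one hn x]
  field_simp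
  ring

lemma strictMonoOn_stretch {n : ℕ} (hn : n ≠ 0) : StrictMonoOn (stretch n) (Ioo 0 1) := by
  intro x hx y hy hxy
  have hux := one_sub_pow_pos_of_mem_Ioo hx hn
  have huy := one_sub_pow_pos_of_mem_Ioo hy hn
  have hlt : 1 - y ^ n < 1 - x ^ n := by
    linarith [pow_lt_pow_left₀ hxy hx.1.le hn]
  have hneg : -(n : ℝ)⁻¹ < 0 := by simp [Nat.pos_of_ne_zero hn]
  exact mul_lt_mul' hxy.le (rpow_lt_rpow_of_neg huy hlt hneg) (rpow_pos_of_pos hux _).le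
    (hx.1.trans hxy)

lemma image_stretch_Ioo {n : ℕ} (hn : n ≠ 0) : stretch n '' Ioo 0 1 = Ioi 0 := by
  refine Subset.antisymm ?_ fun y (hy : 0 < y) => ?_
  · rintro _ ⟨x, hx, rfl⟩
    exact mul_pos hx.1 (rpow_pos_of_pos (one_sub_pow_pos_of_mem_Ioo hx hn) _)
  have hv : 0 < 1 + y ^ n := by positivity
  set x := y * (1 + y ^ n) ^ (-(n : ℝ)⁻¹)
  have hx0 : 0 < x := mul_pos hy (rpow_pos_of_pos hv _)
  have hxn : 1 - x ^ n = (1 + y ^ n)⁻¹ := by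
    rw [mul_pow, rpow_neg_inv_natCast_pow hv.le hn]
    field_simp
    ring
  have hx1 : x < 1 := by
    refine (pow_lt_one_iff_of_nonneg hx0.le hn).1 ?_
    linarith [inv_pos.2 hv]
  refine ⟨x, ⟨hx0, hx1⟩, ?_⟩
  rw [stretch, hxn, inv_rpow hv.le, rpow_neg hv.le, inv_inv, mul_assoc, rpow_neg hv.le,
    inv_mul_cancel₀ (rpow_pos_of_pos hv _).ne', mul_one]

lemma setIntegral_Ioi_one_add_pow_rpow {n : ℕ} (hn : n ≠ 0) (p : ℝ) :
    ∫ t in Ioi (0 : ℝ), (1 + t ^ n) ^ (-p)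
      = ∫ x in Ioo (0 : ℝ) 1, (1 - x ^ n) ^ (p - (n : ℝ)⁻¹ - 1) := by
  have hlt : ∀ x ∈ Ioo (0 : ℝ) 1, x ^ n < 1 := fun x hx => pow_lt_one₀ hx.1.le hx.2 hn
  have hcov := integral_image_eq_integral_abs_deriv_smul measurableSet_Ioo
    (fun x hx => (hasDerivAt_stretch hn (hlt x hx)).hasDerivWithinAt)
    (strictMonoOn_stretch hn).injOn (fun t : ℝ => (1 + t ^ n) ^ (-p))
  rw [image_stretch_Ioo hn] at hcov
  rw [hcov]
  refine setIntegral_congr_fun measurableSet_Ioo fun x hx => ?_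
  have hu := one_sub_pow_pos_of_mem_Ioo hx hn
  simp only [smul_eq_mul]
  rw [abs_of_pos (rpow_pos_of_pos hu _), one_add_stretch_pow hn (hlt x hx), inv_rpow hu.le,
    ← rpow_neg hu.le, neg_neg, ← rpow_add hu]
  ring_nf

theorem stmt_18 :
    (∫ t in Ioi (1:ℝ), (t ^ 3 - 1) ^ (-(2/3 : ℝ)))
        = (∫ t in Ioi (0:ℝ), (1 + t ^ 3) ^ (-(2/3 : ℝ)))
    ∧ (∫ t in Ioi (1:ℝ), (t ^ 3 - 1) ^ (-(2/3 : ℝ)))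
        = ∫ t in (0:ℝ)..1, (1 - t ^ 3) ^ (-(2/3 : ℝ)) := by
  have hμ := setIntegral_Ioi_one_pow_sub_one_rpow three_ne_zero (2 / 3)
  have hν := setIntegral_Ioi_one_add_pow_rpow three_ne_zero (2 / 3)
  have hπ : ∫ t in (0:ℝ)..1, (1 - t ^ 3) ^ (-(2/3 : ℝ))
      = ∫ x in Ioo (0 : ℝ) 1, (1 - x ^ 3) ^ (-(2/3 : ℝ)) := by
    rw [intervalIntegral.integral_of_le zero_le_one, integral_Ioc_eq_integral_Ioo]
  norm_num at hμ hν
  rw [hμ, hν, hπ]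
  exact ⟨rfl, rfl⟩
end
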